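/- arXiv:2503.09177 — 8 statements merged into one kernel-verified Lean document; each statement's English description precedes it below -/
import Mathlib

section
/- Let G be a profinite group with a composition series (G_α)_{α ≤ μ}, and let φ: G → A be a continuous surjection onto a finite group A. Then the distinct subgroups among the images φ(G_α) form a composition series A = A_0 ⊵ A_1 ⊵ ⋯ ⊵ A_n = {e} of A, and each factor A_i/A_{i+1} is isomorphic to G_α/G_{α+1} for some α < μ. -/
open scoped Pointwise

/-- The factor group `H/K` (for `K ⊴ H`, subgroups of an ambient group) is
isomorphic to `S`: there is a surjective homomorphism `H → S` with kernel `K`. -/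
def FactorIso {G : Type*} [Group G] (H K : Subgroup G) (S : Type*) [Group S] : Prop :=
  ∃ φ : ↥H →* S, Function.Surjective φ ∧ φ.ker = K.subgroupOf H

/-- The factor groups `H₁/K₁` and `H₂/K₂` are isomorphic. -/
def StepIso {G₁ : Type*} [Group G₁] {G₂ : Type*} [Group G₂]
    (H₁ K₁ : Subgroup G₁) (H₂ K₂ : Subgroup G₂) : Prop :=
  ∃ (S : Type) (instS : Group S),
    @FactorIso _ _ H₁ K₁ S instS ∧ @FactorIso _ _ H₂ K₂ S instS

/-- `K` is a proper normal subgroup of `H` with simple quotient `H/K`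
(i.e. `K` is a maximal normal subgroup of `H`). -/
def CompStep {G : Type*} [Group G] (H K : Subgroup G) : Prop :=
  K < H ∧ (K.subgroupOf H).Normal ∧
    ∀ N : Subgroup ↥H, N.Normal → K.subgroupOf H ≤ N → N = K.subgroupOf H ∨ N = ⊤

/-- An accessible (transfinite) series of closed subgroups from `T` down to `B`,
indexed by the ordinals `≤ μ`: strictly decreasing, each successor term normal in its
predecessor, and each limit term the intersection of the earlier terms. -/
structure TransfiniteSeries (G : Type*) [Group G] [TopologicalSpace G]
    (μ : Ordinal) (T B : Subgroup G) where
  ser : Ordinal → Subgroup G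
  ser_zero : ser 0 = T
  ser_last : ser μ = B
  isClosed' : ∀ α, IsClosed (ser α : Set G)
  strictAnti' : ∀ ⦃α β : Ordinal⦄, α < β → β ≤ μ → ser β < ser α
  succ_normal : ∀ α < μ, ((ser (α + 1)).subgroupOf (ser α)).Normal
  limit_inter : ∀ α ≤ μ, Order.IsSuccLimit α → ser α = ⨅ β ∈ Set.Iio α, ser β

/-- A composition series from `T` down to `{e}`: an accessible series all of whose
successor quotients are finite nontrivial simple groups. -/
structure CompSeries (G : Type*) [Group G] [TopologicalSpace G]
    (μ : Ordinal) (T : Subgroup G) extends TransfiniteSeries G μ T ⊥ where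
  finiteFactor : ∀ α < μ, (ser (α + 1)).relIndex (ser α) ≠ 0
  simpleFactor : ∀ α < μ, CompStep (ser α) (ser (α + 1))


private lemma ker_equiv_comp {M N P : Type*} [Group M] [Group N] [Group P]
    (f : M →* N) (e : N ≃* P) : (e.toMonoidHom.comp f).ker = f.ker := by
  ext x
  simp [MonoidHom.mem_ker]

private theorem step_image {G : Type*} [Group G] {A : Type*} [Group A] [Finite A]
    (φ : G →* A) (H K : Subgroup G) (hcs : CompStep H K)
    (hne : K.map φ < H.map φ) :
    CompStep (H.map φ) (K.map φ) ∧ StepIso (H.map φ) (K.map φ) H K := by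
  obtain ⟨hKH, hnorm, hmax⟩ := hcs
  set ψ : ↥H →* ↥(H.map φ) := φ.subgroupMap H with hψdef
  have hψs : Function.Surjective ψ := φ.subgroupMap_surjective H
  have himg : (K.subgroupOf H).map ψ = (K.map φ).subgroupOf (H.map φ) := by
    ext x
    simp only [Subgroup.mem_map, Subgroup.mem_subgroupOf]
    constructor
    · rintro ⟨y, hy, rfl⟩
      exact ⟨y, hy, rfl⟩
    · rintro ⟨k, hk, hkx⟩
      exact ⟨⟨k, hKH.le hk⟩, hk, Subtype.ext hkx⟩
  have hnorm' : ((K.map φ).subgroupOf (H.map φ)).Normal := himg ▸ hnorm.map ψ hψs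
  have hmax' : ∀ N : Subgroup ↥(H.map φ), N.Normal → (K.map φ).subgroupOf (H.map φ) ≤ N →
      N = (K.map φ).subgroupOf (H.map φ) ∨ N = ⊤ := by
    intro N hN hle
    have hle' : K.subgroupOf H ≤ N.comap ψ := by
      intro x hx
      exact hle (himg ▸ Subgroup.mem_map_of_mem ψ hx)
    rcases hmax _ (hN.comap ψ) hle' with h | h
    · left
      have h2 := congrArg (Subgroup.map ψ) h
      rwa [Subgroup.map_comap_eq_self_of_surjective hψs, himg] at h2
    · right
      have h2 := congrArg (Subgroup.map ψ) h
      rwa [Subgroup.map_comap_eq_self_of_surjective hψs,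
        Subgroup.map_top_of_surjective ψ hψs] at h2
  haveI := hnorm'
  set Q := ↥(H.map φ) ⧸ (K.map φ).subgroupOf (H.map φ) with hQ
  set π : ↥(H.map φ) →* Q := QuotientGroup.mk' _ with hπ
  have hπs : Function.Surjective π := QuotientGroup.mk'_surjective _
  have hπk : π.ker = (K.map φ).subgroupOf (H.map φ) := QuotientGroup.ker_mk' _
  set θ : ↥H →* Q := π.comp ψ with hθ
  have hθs : Function.Surjective θ := hπs.comp hψs
  have hθk : θ.ker = K.subgroupOf H := by
    have hle : K.subgroupOf H ≤ θ.ker := by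
      intro x hx
      have h1 : ψ x ∈ π.ker := by
        rw [hπk]
        exact himg ▸ Subgroup.mem_map_of_mem ψ hx
      simpa [hθ, MonoidHom.mem_ker] using h1
    rcases hmax _ (MonoidHom.normal_ker θ) hle with h | h
    · exact h
    · exfalso
      have hck : θ.ker = π.ker.comap ψ := (MonoidHom.comap_ker π ψ).symm
      have h2 := congrArg (Subgroup.map ψ) h
      rw [Subgroup.map_top_of_surjective ψ hψs, hck,
        Subgroup.map_comap_eq_self_of_surjective hψs] at h2
      rw [hπk, Subgroup.subgroupOf_eq_top] at h2
      exact hne.not_ge h2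
  haveI : Finite Q := Quotient.finite _
  have e : Shrink.{0} Q ≃* Q := Shrink.mulEquiv
  exact ⟨⟨hne, hnorm', hmax'⟩, Shrink.{0} Q, inferInstance,
    ⟨e.symm.toMonoidHom.comp π, e.symm.surjective.comp hπs,
      by rw [ker_equiv_comp, hπk]⟩,
    ⟨e.symm.toMonoidHom.comp θ, e.symm.surjective.comp hθs,
      by rw [ker_equiv_comp, hθk]⟩⟩

/-- If `(G_α)_{α ≤ μ}` is a composition series of a profinite group `G`
and `φ : G → A` is a continuous surjection onto a finite group, then the distinct
subgroups among the images `φ(G_α)` form a (finite) composition series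
`A = A₀ ⊵ ⋯ ⊵ Aₙ = {e}` of `A`, each of whose factors is isomorphic to some factor
`G_α/G_{α+1}` of the original series. -/
theorem image_of_composition_series
    {G : Type*} [Group G] [TopologicalSpace G] [IsTopologicalGroup G]
    [CompactSpace G] [T2Space G] [TotallyDisconnectedSpace G]
    {μ : Ordinal} (C : CompSeries G μ ⊤)
    (A : Type*) [Group A] [Finite A] [TopologicalSpace A] [DiscreteTopology A]
    (φ : G →* A) (hφc : Continuous φ) (hφs : Function.Surjective φ) :
    ∃ (n : ℕ) (As : ℕ → Subgroup A),
      As 0 = ⊤ ∧ As n = ⊥ ∧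
      (∀ i < n, CompStep (As i) (As (i + 1))) ∧
      (∀ i ≤ n, ∃ α ≤ μ, As i = (C.ser α).map φ) ∧
      (∀ α ≤ μ, ∃ i ≤ n, (C.ser α).map φ = As i) ∧
      (∀ i < n, ∃ α < μ, StepIso (As i) (As (i + 1)) (C.ser α) (C.ser (α + 1))) := by
  classical
  set f : Ordinal → Subgroup A := fun β => (C.ser β).map φ with hf
  have hserm : ∀ ⦃β γ : Ordinal⦄, β ≤ γ → γ ≤ μ → C.ser γ ≤ C.ser β := by
    intro β γ h1 h2
    rcases h1.lt_or_eq with h | rfl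
    · exact (C.strictAnti' h h2).le
    · exact le_rfl
  have hmono : ∀ ⦃β γ : Ordinal⦄, β ≤ γ → γ ≤ μ → f γ ≤ f β :=
    fun β γ h1 h2 => Subgroup.map_mono (hserm h1 h2)
  have hf0 : f 0 = ⊤ := by
    simp only [hf, C.ser_zero]
    exact Subgroup.map_top_of_surjective φ hφs
  have hfμ : f μ = ⊥ := by
    simp only [hf, C.ser_last]
    exact Subgroup.map_bot φ
  -- limit stage lemma via compactness
  have hlim : ∀ δ, δ ≤ μ → Order.IsSuccLimit δ → ∀ x : A, (∀ β < δ, x ∈ f β) → x ∈ f δ := by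
    intro δ hδμ hδ x hx
    haveI hne : Nonempty ↥(Set.Iio δ) := ⟨⟨0, hδ.pos⟩⟩
    set K : ↥(Set.Iio δ) → Set G := fun β => (C.ser β : Set G) ∩ φ ⁻¹' {x} with hK
    have hdir : Directed (· ⊇ ·) K := by
      rintro ⟨β, hβ⟩ ⟨γ, hγ⟩
      refine ⟨⟨max β γ, Set.mem_Iio.mpr (max_lt hβ hγ)⟩, ?_, ?_⟩
      · exact Set.inter_subset_inter_left _
          (hserm (le_max_left _ _) ((max_lt hβ hγ).le.trans hδμ))
      · exact Set.inter_subset_inter_left _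
          (hserm (le_max_right _ _) ((max_lt hβ hγ).le.trans hδμ))
    have hnonempty : ∀ β, (K β).Nonempty := by
      rintro ⟨β, hβ⟩
      obtain ⟨g, hg, hgx⟩ := Subgroup.mem_map.mp (hx β hβ)
      exact ⟨g, hg, hgx⟩
    have hclosed : ∀ β, IsClosed (K β) := fun β =>
      (C.isClosed' _).inter (IsClosed.preimage hφc isClosed_singleton)
    have hcompact : ∀ β, IsCompact (K β) := fun β => (hclosed β).isCompact
    obtain ⟨g, hg⟩ := IsCompact.nonempty_iInter_of_directed_nonempty_isCompact_isClosed
      K hdir hnonempty hcompact hclosed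
    have hgδ : g ∈ C.ser δ := by
      rw [C.limit_inter δ hδμ hδ]
      simp only [Subgroup.mem_iInf]
      intro β hβ
      exact (Set.mem_iInter.mp hg ⟨β, hβ⟩).1
    have hgx : φ g = x := (Set.mem_iInter.mp hg ⟨0, hδ.pos⟩).2
    exact ⟨g, hgδ, hgx⟩
  set nxt : Ordinal → Ordinal := fun β => sInf {γ | γ ≤ μ ∧ f γ < f β} with hnxtdef
  have hnxt : ∀ β, β ≤ μ → f β ≠ ⊥ →
      β < nxt β ∧ nxt β ≤ μ ∧ f (nxt β) < f β ∧
      (∃ γ, nxt β = γ + 1 ∧ γ < μ ∧ f γ = f β) ∧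
      ∀ ρ, β ≤ ρ → ρ < nxt β → f ρ = f β := by
    intro β hβμ hβbot
    have hSne : {γ | γ ≤ μ ∧ f γ < f β}.Nonempty :=
      ⟨μ, le_rfl, by rw [hfμ]; exact bot_lt_iff_ne_bot.mpr hβbot⟩
    obtain ⟨hnμ, hnlt⟩ := csInf_mem hSne
    have hβn : β < nxt β := by
      by_contra h
      push_neg at h
      exact hnlt.not_ge (hmono h hβμ)
    have hconst : ∀ ρ, β ≤ ρ → ρ < nxt β → f ρ = f β := by
      intro ρ h1 h2
      have hρμ : ρ ≤ μ := h2.le.trans hnμ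
      have hnotmem : ρ ∉ {γ | γ ≤ μ ∧ f γ < f β} :=
        notMem_of_lt_csInf h2 (OrderBot.bddBelow _)
      have hnl : ¬ f ρ < f β := fun hc => hnotmem ⟨hρμ, hc⟩
      exact ((hmono h1 hρμ).lt_or_eq.resolve_left hnl)
    refine ⟨hβn, hnμ, hnlt, ?_, hconst⟩
    rcases Ordinal.zero_or_succ_or_isSuccLimit (nxt β) with h0 | ⟨γ, hγ⟩ | hl
    · exact absurd (h0 ▸ hβn) ((zero_le (a := β)).not_gt)
    · replace hγ := hγ.symm
      have hγlt : γ < nxt β := hγ ▸ Order.lt_succ γ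
      have hβγ : β ≤ γ := Order.lt_succ_iff.mp (hγ ▸ hβn)
      exact ⟨γ, by rw [hγ, Ordinal.add_one_eq_succ], hγlt.trans_le hnμ, hconst γ hβγ hγlt⟩
    · exfalso
      refine hnlt.not_ge ?_
      intro x hxmem
      refine hlim (nxt β) hnμ hl x ?_
      intro ρ hρ
      rcases le_total ρ β with h | h
      · exact hmono h hβμ hxmem
      · exact (hconst ρ h hρ) ▸ hxmem
  set a : ℕ → Ordinal := fun i => Nat.rec 0 (fun _ β => nxt β) i with ha
  have ha0 : a 0 = 0 := rfl
  have haS : ∀ i, a (i + 1) = nxt (a i) := fun i => rfl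
  have haμ : ∀ i, a i ≤ μ := by
    intro i
    induction i with
    | zero => exact zero_le (a := μ)
    | succ i ih =>
      rw [haS]
      by_cases hb : f (a i) = ⊥
      · have hemp : {γ | γ ≤ μ ∧ f γ < f (a i)} = ∅ := by
          ext γ
          simp [hb]
        show sInf _ ≤ μ
        rw [hemp, Ordinal.sInf_empty]
        exact zero_le (a := μ)
      · exact (hnxt (a i) ih hb).2.1
  haveI hfin : Finite (Subgroup A) := inferInstance
  have hexn : ∃ i, f (a i) = ⊥ := by
    by_contra h
    push_neg at h
    have hsa : StrictAnti (fun i => f (a i)) := strictAnti_nat_of_succ_lt (fun i => by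
      rw [haS]
      exact (hnxt (a i) (haμ i) (h i)).2.2.1)
    obtain ⟨i, j, hij, hfij⟩ := Finite.exists_ne_map_eq_of_infinite (fun i => f (a i))
    exact hij (hsa.injective hfij)
  set n := Nat.find hexn with hn
  have hfn : f (a n) = ⊥ := Nat.find_spec hexn
  have hltn : ∀ i < n, f (a i) ≠ ⊥ := fun i hi => Nat.find_min hexn hi
  refine ⟨n, fun i => f (a i), show f (a 0) = ⊤ from hf0, hfn, ?_, ?_, ?_, ?_⟩
  · intro i hi
    obtain ⟨hβn, hnμ, hnlt, ⟨γ, hγeq, hγμ, hγf⟩, hconst⟩ := hnxt (a i) (haμ i) (hltn i hi)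
    have hlt' : (C.ser (γ + 1)).map φ < (C.ser γ).map φ := by
      have h2 := hnlt
      rw [hγeq, ← hγf] at h2
      exact h2
    obtain ⟨hcs, _⟩ := step_image φ (C.ser γ) (C.ser (γ + 1)) (C.simpleFactor γ hγμ) hlt'
    show CompStep (f (a i)) (f (a (i + 1)))
    rw [haS, hγeq, ← hγf]
    exact hcs
  · intro i _
    exact ⟨a i, haμ i, rfl⟩
  · intro β hβ
    by_cases h : a n ≤ β
    · refine ⟨n, le_rfl, ?_⟩
      have hle : f β ≤ f (a n) := hmono h hβ
      rw [hfn] at hle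
      show f β = f (a n)
      rw [hfn]
      exact le_bot_iff.mp hle
    · push_neg at h
      have hP : ∃ j, β < a j := ⟨n, h⟩
      have hk0 : Nat.find hP ≠ 0 := by
        intro h0
        have := Nat.find_spec hP
        rw [h0, ha0] at this
        exact (zero_le (a := β)).not_gt this
      obtain ⟨m, hm1⟩ := Nat.exists_eq_succ_of_ne_zero hk0
      have hspec : β < a (m + 1) := by
        have h2 := Nat.find_spec hP
        rwa [hm1] at h2
      have hmin : ¬ β < a m := Nat.find_min hP (by omega)
      have hmn : m < n := by
        have := Nat.find_min' hP h
        omega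
      refine ⟨m, hmn.le, ?_⟩
      have := (hnxt (a m) (haμ m) (hltn m hmn)).2.2.2.2 β (not_lt.mp hmin)
        (by rw [← haS]; exact hspec)
      exact this
  · intro i hi
    obtain ⟨hβn, hnμ, hnlt, ⟨γ, hγeq, hγμ, hγf⟩, hconst⟩ := hnxt (a i) (haμ i) (hltn i hi)
    have hlt' : (C.ser (γ + 1)).map φ < (C.ser γ).map φ := by
      have h2 := hnlt
      rw [hγeq, ← hγf] at h2
      exact h2
    obtain ⟨_, hsi⟩ := step_image φ (C.ser γ) (C.ser (γ + 1)) (C.simpleFactor γ hγμ) hlt'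
    refine ⟨γ, hγμ, ?_⟩
    show StepIso (f (a i)) (f (a (i + 1))) (C.ser γ) (C.ser (γ + 1))
    rw [haS, hγeq, ← hγf]
    exact hsi
end

section
/- Let G be a profinite group with a composition series (G_α)_{α ≤ μ}. For every ordinal α < μ, the finite simple group G_α/G_{α+1} occurs as a composition factor of some finite continuous quotient of G. Consequently, the set of composition factors {G_α/G_{α+1} : α < μ} equals the set of composition factors of all finite continuous quotients of G, and in particular does not depend on the choice of composition series. -/
open scoped Pointwise

/-- Key Prop: the two factor groups are isomorphic (with normality recorded). -/
structure QIso {G₁ : Type*} [Group G₁] {G₂ : Type*} [Group G₂]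
    (H₁ K₁ : Subgroup G₁) (H₂ K₂ : Subgroup G₂) : Prop where
  [n₁ : (K₁.subgroupOf H₁).Normal]
  [n₂ : (K₂.subgroupOf H₂).Normal]
  iso : Nonempty ((↥H₁ ⧸ K₁.subgroupOf H₁) ≃* (↥H₂ ⧸ K₂.subgroupOf H₂))

section QIsoBasic

variable {G₁ : Type*} [Group G₁] {G₂ : Type*} [Group G₂] {G₃ : Type*} [Group G₃]
variable {H₁ K₁ : Subgroup G₁} {H₂ K₂ : Subgroup G₂} {H₃ K₃ : Subgroup G₃}

theorem QIso.symm (h : QIso H₁ K₁ H₂ K₂) : QIso H₂ K₂ H₁ K₁ := by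
  have n₁ := h.n₁; have n₂ := h.n₂
  exact ⟨⟨h.iso.some.symm⟩⟩

theorem QIso.trans (h : QIso H₁ K₁ H₂ K₂) (h' : QIso H₂ K₂ H₃ K₃) : QIso H₁ K₁ H₃ K₃ := by
  have n₁ := h.n₁; have n₂ := h.n₂; have n₃ := h'.n₂
  exact ⟨⟨h.iso.some.trans h'.iso.some⟩⟩

/-- From a surjective hom onto the factor group, get `QIso`. -/
theorem qiso_of_surjective [hn : (K₂.subgroupOf H₂).Normal]
    (hK₁ : (K₁.subgroupOf H₁).Normal)
    (χ : ↥H₁ →* (↥H₂ ⧸ K₂.subgroupOf H₂)) (hs : Function.Surjective χ)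
    (hker : χ.ker = K₁.subgroupOf H₁) : QIso H₁ K₁ H₂ K₂ := by
  have e := QuotientGroup.quotientKerEquivOfSurjective χ hs
  exact ⟨⟨(QuotientGroup.quotientMulEquivOfEq hker.symm).trans e⟩⟩

theorem FactorIso.of_mulEquiv {S : Type*} [Group S] [hn : (K₁.subgroupOf H₁).Normal]
    (e : (↥H₁ ⧸ K₁.subgroupOf H₁) ≃* S) : FactorIso H₁ K₁ S := by
  refine ⟨e.toMonoidHom.comp (QuotientGroup.mk' _), ?_, ?_⟩
  · exact e.surjective.comp (QuotientGroup.mk'_surjective _)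
  · ext x
    simp only [MonoidHom.mem_ker, MonoidHom.comp_apply, MulEquiv.coe_toMonoidHom]
    rw [show (1 : S) = e 1 by simp, e.apply_eq_iff_eq]
    rw [show ((QuotientGroup.mk' (K₁.subgroupOf H₁)) x = 1) ↔ x ∈ (K₁.subgroupOf H₁) from
      QuotientGroup.eq_one_iff x]

/-- An instance-free wrapper around `Fin n`, in `Type 0`. -/
structure Wrap (n : ℕ) : Type where
  val : Fin n

/-- Convert a `QIso` to a `StepIso` when the factor group is finite. -/
theorem QIso.stepIso (h : QIso H₁ K₁ H₂ K₂)
    (hfin : Finite (↥H₂ ⧸ K₂.subgroupOf H₂)) : StepIso H₁ K₁ H₂ K₂ := by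
  have n₁ := h.n₁; have n₂ := h.n₂
  obtain ⟨e⟩ := h.iso
  obtain ⟨n, ⟨f⟩⟩ := Finite.exists_equiv_fin (↥H₂ ⧸ K₂.subgroupOf H₂)
  let g : Wrap n ≃ (↥H₂ ⧸ K₂.subgroupOf H₂) :=
    ⟨fun w => f.symm w.val, fun q => ⟨f q⟩, fun w => by simp, fun q => by simp⟩
  letI : Group (Wrap n) := Equiv.group g
  have e₂ : (↥H₂ ⧸ K₂.subgroupOf H₂) ≃* Wrap n := (Equiv.mulEquiv g).symm
  exact ⟨Wrap n, inferInstance, FactorIso.of_mulEquiv ((e.trans e₂)),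
    FactorIso.of_mulEquiv e₂⟩

end QIsoBasic

section Core

variable {G : Type*} [Group G]

theorem map_mk'_self {A : Type*} [Group A] (X : Subgroup A) [X.Normal] :
    X.map (QuotientGroup.mk' X) = ⊥ := by
  ext q
  simp only [Subgroup.mem_map, Subgroup.mem_bot, QuotientGroup.mk'_apply]
  constructor
  · rintro ⟨x, hx, rfl⟩; exact (QuotientGroup.eq_one_iff x).2 hx
  · rintro rfl; exact ⟨1, X.one_mem, rfl⟩

theorem map_ker_eq_bot {A : Type*} [Group A] {B : Type*} [Group B] (f : A →* B) :
    f.ker.map f = ⊥ := by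
  ext q
  simp only [Subgroup.mem_map, MonoidHom.mem_ker, Subgroup.mem_bot]
  constructor
  · rintro ⟨x, hx, rfl⟩; exact hx
  · rintro rfl; exact ⟨1, by simp⟩

theorem mem_sup_of_normal_prod {A N : Subgroup G} [hN : N.Normal] {x : G} (hx : x ∈ A ⊔ N) :
    ∃ a ∈ A, ∃ n ∈ N, a * n = x := by
  have : x ∈ (↑(A ⊔ N) : Set G) := hx
  rw [Subgroup.mul_normal A N] at this
  simpa [Set.mem_mul] using this

/-- The canonical surjection `↥A →* ↥(A' ) ⧸ K'.subgroupOf A'` when `A ≤ A'`,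
`A' ≤ (K')ᴺ` and every element of `A'` is a product of an element of `A` and one of `K'`. -/
theorem sup_quot_hom {A A' K' : Subgroup G} [hn : (K'.subgroupOf A').Normal]
    (hAA' : A ≤ A') (hprod : ∀ g : G, g ∈ A' → ∃ a ∈ A, ∃ k ∈ K', a * k = g) :
    ∃ χ : ↥A →* (↥A' ⧸ K'.subgroupOf A'), Function.Surjective χ ∧
      χ.ker = K'.subgroupOf A := by
  refine ⟨(QuotientGroup.mk' _).comp (Subgroup.inclusion hAA'), ?_, ?_⟩
  · intro q
    induction q using QuotientGroup.induction_on with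
    | H g =>
      obtain ⟨a, ha, k, hk, hak⟩ := hprod g g.2
      refine ⟨⟨a, ha⟩, ?_⟩
      simp only [MonoidHom.comp_apply, QuotientGroup.mk'_apply]
      rw [QuotientGroup.eq]
      rw [Subgroup.mem_subgroupOf]
      show ((Subgroup.inclusion hAA' ⟨a, ha⟩ : ↥A')⁻¹ * g : G) ∈ K'
      have hco : ((Subgroup.inclusion hAA' ⟨a, ha⟩ : ↥A') : G) = a := rfl
      rw [InvMemClass.coe_inv, hco, ← hak, inv_mul_cancel_left]
      exact hk
  · ext x
    simp only [MonoidHom.mem_ker, MonoidHom.comp_apply, QuotientGroup.mk'_apply,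
      QuotientGroup.eq_one_iff, Subgroup.mem_subgroupOf, Subgroup.coe_inclusion]

/-- Reflect a composition step along a surjection onto the factor group:
if `CompStep H K` and `χ : ↥H'' →* ↥H ⧸ K.subgroupOf H` is surjective with kernel
`K''.subgroupOf H''`, then `CompStep H'' K''`. -/
theorem compStep_reflect {H K H'' K'' : Subgroup G} [hnq : (K.subgroupOf H).Normal]
    (h : CompStep H K) (hle : K'' ≤ H'')
    (χ : ↥H'' →* (↥H ⧸ K.subgroupOf H))
    (hs : Function.Surjective χ) (hker : χ.ker = K''.subgroupOf H'') :
    CompStep H'' K'' := by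
  obtain ⟨hlt, hnorm, hmax⟩ := h
  refine ⟨?_, ?_, ?_⟩
  · refine lt_of_le_of_ne hle ?_
    intro heq
    obtain ⟨a, haH, haK⟩ := SetLike.exists_of_lt hlt
    have h1 : (QuotientGroup.mk ⟨a, haH⟩ : ↥H ⧸ K.subgroupOf H) ≠ 1 := by
      rw [Ne, QuotientGroup.eq_one_iff]
      simpa [Subgroup.mem_subgroupOf] using haK
    obtain ⟨b, hb⟩ := hs (QuotientGroup.mk ⟨a, haH⟩)
    have : b ∈ χ.ker := by
      rw [hker, Subgroup.mem_subgroupOf]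
      exact heq ▸ b.2
    rw [MonoidHom.mem_ker, hb] at this
    exact h1 this
  · rw [← hker]; exact χ.normal_ker
  · intro N hN hNle
    have hkerle : χ.ker ≤ N := hker ▸ hNle
    have hMnorm : (N.map χ).Normal := Subgroup.Normal.map hN χ hs
    have hcnorm : ((N.map χ).comap (QuotientGroup.mk' (K.subgroupOf H))).Normal :=
      hMnorm.comap _
    have hcle : K.subgroupOf H ≤ (N.map χ).comap (QuotientGroup.mk' (K.subgroupOf H)) := by
      intro x hx
      simp only [Subgroup.mem_comap, QuotientGroup.mk'_apply]
      rw [show (QuotientGroup.mk x : ↥H ⧸ K.subgroupOf H) = 1 from (QuotientGroup.eq_one_iff x).2 hx]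
      exact Subgroup.one_mem _
    rcases hmax _ hcnorm hcle with hc | hc
    · left
      have hmapbot : N.map χ = ⊥ := by
        have := Subgroup.map_comap_eq_self_of_surjective
          (QuotientGroup.mk'_surjective (K.subgroupOf H)) (N.map χ)
        rw [hc] at this
        rw [← this, map_mk'_self]
      rw [Subgroup.map_eq_bot_iff, hker] at hmapbot
      exact le_antisymm hmapbot hNle
    · right
      have hmaptop : N.map χ = ⊤ := by
        have := Subgroup.map_comap_eq_self_of_surjective
          (QuotientGroup.mk'_surjective (K.subgroupOf H)) (N.map χ)
        rw [hc] at this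
        rw [← this, Subgroup.map_top_of_surjective _ (QuotientGroup.mk'_surjective _)]
      have h2 := Subgroup.comap_map_eq χ N
      rw [hmaptop, Subgroup.comap_top] at h2
      rw [sup_eq_left.2 hkerle] at h2
      exact h2.symm

/-- Transfer a composition step along a surjection from the subgroup of a known step:
if `CompStep H K` and `χ : ↥H →* ↥H' ⧸ K'.subgroupOf H'` is surjective with kernel
`K.subgroupOf H`, then `CompStep H' K'`. -/
theorem compStep_transfer {H K H' K' : Subgroup G} (h : CompStep H K)
    (hle : K' ≤ H') [hn' : (K'.subgroupOf H').Normal]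
    (χ : ↥H →* (↥H' ⧸ K'.subgroupOf H'))
    (hs : Function.Surjective χ) (hker : χ.ker = K.subgroupOf H) :
    CompStep H' K' := by
  obtain ⟨hlt, hnorm, hmax⟩ := h
  refine ⟨?_, hn', ?_⟩
  · refine lt_of_le_of_ne hle ?_
    intro heq
    obtain ⟨a, haH, haK⟩ := SetLike.exists_of_lt hlt
    have h1 : χ ⟨a, haH⟩ ≠ 1 := by
      rw [Ne, ← MonoidHom.mem_ker, hker, Subgroup.mem_subgroupOf]
      exact haK
    apply h1
    have : ∀ q : ↥H' ⧸ K'.subgroupOf H', q = 1 := by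
      intro q
      induction q using QuotientGroup.induction_on with
      | H g => rw [QuotientGroup.eq_one_iff]; rw [Subgroup.mem_subgroupOf]; exact heq ▸ g.2
    exact this _
  · intro N hN hNle
    have hMnorm : (N.map (QuotientGroup.mk' (K'.subgroupOf H'))).Normal :=
      Subgroup.Normal.map hN _ (QuotientGroup.mk'_surjective _)
    set M := N.map (QuotientGroup.mk' (K'.subgroupOf H')) with hM
    have hcnorm : (M.comap χ).Normal := hMnorm.comap χ
    have hcle : K.subgroupOf H ≤ M.comap χ := by
      rw [← hker]
      intro x hx
      simp only [Subgroup.mem_comap]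
      rw [MonoidHom.mem_ker] at hx
      rw [hx]
      exact Subgroup.one_mem _
    rcases hmax _ hcnorm hcle with hc | hc
    · left
      have hMbot : M = ⊥ := by
        have := Subgroup.map_comap_eq_self_of_surjective hs M
        rw [hc, ← hker] at this
        rw [← this]
        exact map_ker_eq_bot _
      have : N ≤ (QuotientGroup.mk' (K'.subgroupOf H')).ker := by
        rw [← Subgroup.map_eq_bot_iff, ← hM, hMbot]
      rw [QuotientGroup.ker_mk'] at this
      exact le_antisymm this hNle
    · right
      have hMtop : M = ⊤ := by
        have := Subgroup.map_comap_eq_self_of_surjective hs M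
        rw [hc] at this
        rw [← this, Subgroup.map_top_of_surjective _ hs]
      have := Subgroup.comap_map_eq (QuotientGroup.mk' (K'.subgroupOf H')) N
      rw [← hM, hMtop, Subgroup.comap_top, QuotientGroup.ker_mk'] at this
      rw [sup_eq_left.2 hNle] at this
      exact this.symm

end Core

section JHL

variable {G : Type*} [Group G]

theorem subgroupOf_sup_subgroupOf (x y : Subgroup G) :
    x.subgroupOf (x ⊔ y) ⊔ y.subgroupOf (x ⊔ y) = ⊤ := by
  apply Subgroup.map_injective (x ⊔ y).subtype_injective
  rw [Subgroup.map_sup, Subgroup.subgroupOf_map_subtype, Subgroup.subgroupOf_map_subtype]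
  have : Subgroup.map (x ⊔ y).subtype ⊤ = x ⊔ y := by
    rw [← MonoidHom.range_eq_map, Subgroup.range_subtype]
  rw [this, inf_of_le_left (le_sup_left : x ≤ x ⊔ y), inf_of_le_left (le_sup_right : y ≤ x ⊔ y)]

theorem inf_subgroupOf_right' (x y : Subgroup G) :
    (x ⊓ y).subgroupOf y = x.subgroupOf y := by
  ext a
  simp [Subgroup.mem_subgroupOf, a.2]

/-- The second isomorphism theorem surjection, assuming `x` normal in `x ⊔ y`. -/
theorem second_iso_hom (x y : Subgroup G) [hn : (x.subgroupOf (x ⊔ y)).Normal] :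
    ∃ ψ : ↥y →* (↥(x ⊔ y) ⧸ x.subgroupOf (x ⊔ y)), Function.Surjective ψ ∧
      ψ.ker = (x ⊓ y).subgroupOf y := by
  have hprod : ∀ g : G, g ∈ x ⊔ y → ∃ a ∈ y, ∃ k ∈ x, a * k = g := by
    intro g hg
    have hh := subgroupOf_sup_subgroupOf x y
    rw [sup_comm (x.subgroupOf (x ⊔ y))] at hh
    have htop : (⟨g, hg⟩ : ↥(x ⊔ y)) ∈
        y.subgroupOf (x ⊔ y) ⊔ x.subgroupOf (x ⊔ y) := by
      rw [hh]
      trivial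
    obtain ⟨a, haY, k, hkX, hak⟩ := mem_sup_of_normal_prod htop
    refine ⟨a, haY, k, hkX, ?_⟩
    have := congrArg (Subtype.val) hak
    simpa using this
  obtain ⟨ψ, hs, hk⟩ := sup_quot_hom (A := y) (A' := x ⊔ y) (K' := x)
    le_sup_right hprod
  exact ⟨ψ, hs, by rw [hk, inf_subgroupOf_right']⟩

instance : JordanHolderLattice (Subgroup G) where
  IsMaximal x y := CompStep y x
  lt_of_isMaximal h := h.1
  sup_eq_of_isMaximal := by
    intro x y z hx hy hne
    have hxz : x ≤ z := hx.1.le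
    have hyz : y ≤ z := hy.1.le
    letI := hx.2.1
    letI := hy.2.1
    have hM : (x.subgroupOf z ⊔ y.subgroupOf z).Normal := Subgroup.sup_normal _ _
    rcases hx.2.2 _ hM le_sup_left with hc | hc
    · exfalso
      have hyx : y.subgroupOf z ≤ x.subgroupOf z := by
        rw [← hc]; exact le_sup_right
      rcases hy.2.2 _ hx.2.1 hyx with hc2 | hc2
      · apply hne
        have := congrArg (Subgroup.map z.subtype) hc2
        rwa [Subgroup.subgroupOf_map_subtype, Subgroup.subgroupOf_map_subtype,
          inf_of_le_left hxz, inf_of_le_left hyz] at this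
      · have := congrArg (Subgroup.map z.subtype) hc2
        rw [Subgroup.subgroupOf_map_subtype, inf_of_le_left hxz] at this
        rw [show Subgroup.map z.subtype ⊤ = z by
          rw [← MonoidHom.range_eq_map, Subgroup.range_subtype]] at this
        exact absurd this (ne_of_lt hx.1)
    · have := congrArg (Subgroup.map z.subtype) hc
      rwa [Subgroup.map_sup, Subgroup.subgroupOf_map_subtype, Subgroup.subgroupOf_map_subtype,
        inf_of_le_left hxz, inf_of_le_left hyz,
        show Subgroup.map z.subtype ⊤ = z by
          rw [← MonoidHom.range_eq_map, Subgroup.range_subtype]] at this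
  isMaximal_inf_left_of_isMaximal_sup := by
    intro x y hx hy
    letI := hy.2.1
    have hyn : (y.subgroupOf (y ⊔ x)).Normal := by rwa [sup_comm y x]
    obtain ⟨ψ, hs, hk⟩ := second_iso_hom y x
    have h' : CompStep (y ⊔ x) y := by rwa [sup_comm x y] at hy
    have := compStep_reflect h' (inf_le_left : x ⊓ y ≤ x) ψ hs
      (by rw [hk, inf_comm])
    exact this

end JHL
section Topo

theorem normal_subgroupOf_of_le_normalizer {G : Type*} [Group G] {H K : Subgroup G}
    (h : H ≤ Subgroup.normalizer (K : Set G)) : (K.subgroupOf H).Normal := by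
  constructor
  intro x hx g
  rw [Subgroup.mem_subgroupOf] at hx ⊢
  have := (Subgroup.mem_normalizer_iff.mp (h g.2) ↑x).mp hx
  simpa using this

variable {G : Type*} [Group G] [TopologicalSpace G] [IsTopologicalGroup G]
    [CompactSpace G] [T2Space G] [TotallyDisconnectedSpace G]
    {μ : Ordinal} (C : CompSeries G μ ⊤)
    {N : Subgroup G} (hNn : N.Normal) (hNo : IsOpen (N : Set G))

theorem ser_antitone {β γ : Ordinal} (hβγ : β ≤ γ) (hγ : γ ≤ μ) : C.ser γ ≤ C.ser β := by
  rcases eq_or_lt_of_le hβγ with rfl | h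
  · exact le_rfl
  · exact (C.strictAnti' h hγ).le

include hNn hNo in
theorem limit_sup_mem {γ : Ordinal} (hγ : γ ≤ μ) (hlim : Order.IsSuccLimit γ) {x : G}
    (hx : ∀ β < γ, x ∈ C.ser β ⊔ N) : x ∈ C.ser γ ⊔ N := by
  haveI := hNn
  have hNc : IsClosed (N : Set G) := Subgroup.isClosed_of_isOpen N hNo
  set K : {β : Ordinal // β < γ} → Set G :=
    fun b => (C.ser b.1 : Set G) ∩ (x • (N : Set G)) with hK
  haveI : Nonempty {β : Ordinal // β < γ} := ⟨⟨0, hlim.pos⟩⟩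
  have hKne : ∀ b, (K b).Nonempty := by
    intro b
    obtain ⟨a, ha, n, hn, han⟩ := mem_sup_of_normal_prod (hx b.1 b.2)
    refine ⟨a, ha, ?_⟩
    refine ⟨n⁻¹, inv_mem hn, ?_⟩
    show x * n⁻¹ = a
    rw [← han]
    group
  have hKcl : ∀ b, IsClosed (K b) := by
    intro b
    exact (C.isClosed' b.1).inter (hNc.smul x)
  have hKcp : ∀ b, IsCompact (K b) := fun b => (hKcl b).isCompact
  have hdir : Directed (· ⊇ ·) K := by
    intro b₁ b₂
    rcases le_total b₁.1 b₂.1 with h | h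
    · exact ⟨b₂, Set.inter_subset_inter_left _
        (ser_antitone C h (le_of_lt (lt_of_lt_of_le b₂.2 hγ))), le_refl _⟩
    · exact ⟨b₁, le_refl _, Set.inter_subset_inter_left _
        (ser_antitone C h (le_of_lt (lt_of_lt_of_le b₁.2 hγ)))⟩
  obtain ⟨y, hy⟩ := IsCompact.nonempty_iInter_of_directed_nonempty_isCompact_isClosed
    K hdir hKne hKcp hKcl
  simp only [Set.mem_iInter] at hy
  have hyser : y ∈ C.ser γ := by
    rw [C.limit_inter γ hγ hlim]
    simp only [Subgroup.mem_iInf, Set.mem_Iio]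
    intro β hβ
    exact ((hy ⟨β, hβ⟩).1 : y ∈ (C.ser β : Set G))
  obtain ⟨m, hm, hxm⟩ := (hy ⟨0, hlim.pos⟩).2
  have hxm' : x * m = y := hxm
  have : x = y * m⁻¹ := by rw [← hxm']; group
  rw [this]
  exact Subgroup.mul_mem _ (Subgroup.mem_sup_left hyser)
    (Subgroup.mem_sup_right (inv_mem hm))

include hNn in
theorem succ_sup_dichotomy {δ : Ordinal} (hδ : δ < μ) :
    C.ser (δ + 1) ⊔ N = C.ser δ ⊔ N ∨
      (CompStep (C.ser δ ⊔ N) (C.ser (δ + 1) ⊔ N) ∧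
        QIso (C.ser δ ⊔ N) (C.ser (δ + 1) ⊔ N) (C.ser δ) (C.ser (δ + 1))) := by
  haveI := hNn
  set A := C.ser δ with hA
  set B := C.ser (δ + 1) with hB
  have hstep : CompStep A B := C.simpleFactor δ hδ
  have hBA : B < A := hstep.1
  haveI hBnormA : (B.subgroupOf A).Normal := hstep.2.1
  -- B ⊔ N is normalized by A ⊔ N
  have hnorm : A ⊔ N ≤ Subgroup.normalizer ((B ⊔ N : Subgroup G) : Set G) := by
    have hA' : ∀ g ∈ A, ∀ h ∈ B ⊔ N, g * h * g⁻¹ ∈ B ⊔ N := by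
      intro g hg h hh
      obtain ⟨b, hb, n, hn, hbn⟩ := mem_sup_of_normal_prod hh
      have h1 : g * b * g⁻¹ ∈ B :=
        (Subgroup.normal_subgroupOf_iff hBA.le).mp hBnormA b g hb hg
      have h2 : g * n * g⁻¹ ∈ N := hNn.conj_mem n hn g
      have : g * h * g⁻¹ = (g * b * g⁻¹) * (g * n * g⁻¹) := by
        rw [← hbn]; group
      rw [this]
      exact Subgroup.mul_mem _ (Subgroup.mem_sup_left h1) (Subgroup.mem_sup_right h2)
    have hN' : ∀ g ∈ N, ∀ h ∈ B ⊔ N, g * h * g⁻¹ ∈ B ⊔ N := by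
      intro g hg h hh
      obtain ⟨b, hb, n, hn, hbn⟩ := mem_sup_of_normal_prod hh
      have h1 : b⁻¹ * g * b ∈ N := by
        have := hNn.conj_mem g hg b⁻¹
        simpa using this
      have : g * h * g⁻¹ = b * ((b⁻¹ * g * b) * n * g⁻¹) := by
        rw [← hbn]; group
      rw [this]
      exact Subgroup.mul_mem _ (Subgroup.mem_sup_left hb)
        (Subgroup.mem_sup_right
          (Subgroup.mul_mem _ (Subgroup.mul_mem _ h1 hn) (inv_mem hg)))
    have key : ∀ {H : Subgroup G}, (∀ g ∈ H, ∀ h ∈ B ⊔ N, g * h * g⁻¹ ∈ B ⊔ N) →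
        H ≤ Subgroup.normalizer ((B ⊔ N : Subgroup G) : Set G) := by
      intro H hH g hg
      rw [Subgroup.mem_normalizer_iff]
      intro h
      constructor
      · exact fun hh => hH g hg h hh
      · intro hh
        have := hH g⁻¹ (inv_mem hg) _ hh
        simpa [mul_assoc] using this
    exact sup_le (key hA') (key hN')
  haveI hn' : ((B ⊔ N).subgroupOf (A ⊔ N)).Normal :=
    normal_subgroupOf_of_le_normalizer hnorm
  have hBNle : B ⊔ N ≤ A ⊔ N := sup_le_sup_right hBA.le N
  obtain ⟨χ, hs, hk⟩ := sup_quot_hom (A := A) (A' := A ⊔ N) (K' := B ⊔ N)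
    le_sup_left (by
      intro g hg
      obtain ⟨a, ha, n, hn, han⟩ := mem_sup_of_normal_prod hg
      exact ⟨a, ha, n, Subgroup.mem_sup_right hn, han⟩)
  have hkerB : B.subgroupOf A ≤ χ.ker := by
    rw [hk]
    intro b hb
    rw [Subgroup.mem_subgroupOf] at hb ⊢
    exact Subgroup.mem_sup_left hb
  rcases hstep.2.2 χ.ker χ.normal_ker hkerB with hc | hc
  · -- nontrivial step case
    right
    have hker' : χ.ker = B.subgroupOf A := hc
    constructor
    · exact compStep_transfer hstep hBNle χ hs hker'
    · exact (qiso_of_surjective (hc ▸ χ.normal_ker) χ hs hker').symm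
  · -- collapsing case
    left
    refine le_antisymm hBNle (sup_le ?_ le_sup_right)
    intro a ha
    have : (⟨a, ha⟩ : ↥A) ∈ χ.ker := by rw [hc]; trivial
    rw [hk, Subgroup.mem_subgroupOf] at this
    exact this

end Topo

section Chain

set_option linter.unusedSectionVars false

variable {G : Type*} [Group G] [TopologicalSpace G] [IsTopologicalGroup G]
    [CompactSpace G] [T2Space G] [TotallyDisconnectedSpace G]
    {μ : Ordinal} (C : CompSeries G μ ⊤)
    {N : Subgroup G} (hNn : N.Normal) (hNo : IsOpen (N : Set G))

include hNn hNo in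
theorem jump_finite :
    {β : Ordinal | β < μ ∧ C.ser (β + 1) ⊔ N ≠ C.ser β ⊔ N}.Finite := by
  haveI := hNn
  haveI : Finite (G ⧸ N) := Subgroup.quotient_finite_of_isOpen N hNo
  haveI : Finite (Subgroup (G ⧸ N)) :=
    Finite.of_injective (fun H => (H : Set (G ⧸ N))) SetLike.coe_injective
  set J := {β : Ordinal | β < μ ∧ C.ser (β + 1) ⊔ N ≠ C.ser β ⊔ N} with hJ
  set Φ : Ordinal → Subgroup (G ⧸ N) :=
    fun β => (C.ser β ⊔ N).map (QuotientGroup.mk' N) with hΦ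
  apply Set.Finite.of_finite_image (f := Φ)
  · exact Set.Finite.subset Set.finite_univ (Set.subset_univ _)
  · -- injectivity on J
    have hF : ∀ β γ : Ordinal, Φ β = Φ γ → C.ser β ⊔ N = C.ser γ ⊔ N := by
      intro β γ h
      have := congrArg (Subgroup.comap (QuotientGroup.mk' N)) h
      rwa [Subgroup.comap_map_eq, Subgroup.comap_map_eq, QuotientGroup.ker_mk',
        sup_eq_left.2 (le_sup_right : N ≤ C.ser β ⊔ N),
        sup_eq_left.2 (le_sup_right : N ≤ C.ser γ ⊔ N)] at this
    have key : ∀ β γ : Ordinal, β ∈ J → γ ∈ J → Φ β = Φ γ → ¬ β < γ := by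
      intro β γ hβ hγ h hlt
      have heq : C.ser β ⊔ N = C.ser γ ⊔ N := hF β γ h
      have h1 : β + 1 ≤ γ := by
        rw [Ordinal.add_one_eq_succ, Order.succ_le_iff]; exact hlt
      have h2 : C.ser γ ⊔ N ≤ C.ser (β + 1) ⊔ N :=
        sup_le_sup_right (ser_antitone C h1 hγ.1.le) N
      have h3 : C.ser (β + 1) ⊔ N ≤ C.ser β ⊔ N :=
        sup_le_sup_right (ser_antitone C (by
          rw [Ordinal.add_one_eq_succ]; exact Order.le_succ β)
          (by rw [Ordinal.add_one_eq_succ, Order.succ_le_iff]; exact hβ.1)) N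
      exact hβ.2 (le_antisymm h3 (heq ▸ h2))
    intro β hβ γ hγ h
    rcases lt_trichotomy β γ with hlt | heq | hlt
    · exact absurd hlt (key β γ hβ hγ h)
    · exact heq
    · exact absurd hlt (key γ β hγ hβ h.symm)

include hNn hNo in
theorem const_between (γ : Ordinal) : γ ≤ μ → ∀ β ≤ γ,
    (∀ δ, β ≤ δ → δ < γ → C.ser (δ + 1) ⊔ N = C.ser δ ⊔ N) →
    C.ser γ ⊔ N = C.ser β ⊔ N := by
  induction γ using Ordinal.induction with
  | h γ ih =>
    intro hγ β hβ hno
    rcases eq_or_lt_of_le hβ with rfl | hlt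
    · rfl
    rcases Ordinal.zero_or_succ_or_isSuccLimit γ with h0 | ⟨δ, hsucc⟩ | hlim
    · rw [h0] at hlt; exact absurd hlt (not_lt_zero (a := β))
    · rw [← Ordinal.add_one_eq_succ] at hsucc
      subst hsucc
      have hβδ : β ≤ δ := by
        rw [Ordinal.add_one_eq_succ, Order.lt_succ_iff] at hlt; exact hlt
      have hδγ : δ < δ + 1 := by
        rw [Ordinal.add_one_eq_succ]; exact Order.lt_succ δ
      have h1 : C.ser (δ + 1) ⊔ N = C.ser δ ⊔ N := hno δ hβδ hδγ
      rw [h1]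
      exact ih δ hδγ (le_trans hδγ.le hγ) β hβδ
        (fun δ' h' h'' => hno δ' h' (lt_trans h'' hδγ))
    · apply le_antisymm
      · exact sup_le_sup_right (ser_antitone C hlt.le hγ) N
      · intro x hx
        apply limit_sup_mem C hNn hNo hγ hlim
        intro δ' hδ'
        rcases le_or_gt δ' β with h' | h'
        · exact sup_le_sup_right (ser_antitone C h' (le_trans hlt.le hγ)) N hx
        · have := ih δ' hδ' (le_trans hδ'.le hγ) β h'.le
            (fun δ'' h1 h2 => hno δ'' h1 (lt_trans h2 hδ'))
          rw [this]
          exact hx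

include hNn hNo in
theorem canonical_chain :
    ∃ (k : ℕ) (c : ℕ → Subgroup G), c 0 = ⊤ ∧ c k = N ∧
      (∀ i < k, CompStep (c i) (c (i + 1))) ∧
      (∀ i < k, ∃ β < μ, QIso (c i) (c (i + 1)) (C.ser β) (C.ser (β + 1))) ∧
      (∀ β < μ, C.ser β ⊓ N ≤ C.ser (β + 1) →
        ∃ i < k, QIso (c i) (c (i + 1)) (C.ser β) (C.ser (β + 1))) := by
  haveI := hNn
  set J := {β : Ordinal | β < μ ∧ C.ser (β + 1) ⊔ N ≠ C.ser β ⊔ N} with hJdef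
  have hJfin : J.Finite := jump_finite C hNn hNo
  set Js := hJfin.toFinset with hJs
  set k := Js.card with hk
  set oe := Js.orderIsoOfFin rfl with hoe
  set b : Fin k → Ordinal := fun i => (oe i : Ordinal) with hb
  have hbJ : ∀ i, b i ∈ J := by
    intro i
    exact (Set.Finite.mem_toFinset hJfin).mp (oe i).2
  have hbμ : ∀ i, b i < μ := fun i => (hbJ i).1
  have hbmono : ∀ {i j : Fin k}, i < j → b i < b j := by
    intro i j hij
    have : oe i < oe j := (OrderIso.lt_iff_lt oe).2 hij
    exact this
  have hbsurj : ∀ β ∈ J, ∃ i : Fin k, b i = β := by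
    intro β hβ
    have hβ' : β ∈ Js := (Set.Finite.mem_toFinset hJfin).mpr hβ
    refine ⟨oe.symm ⟨β, hβ'⟩, ?_⟩
    show ((oe (oe.symm ⟨β, hβ'⟩) : {x // x ∈ Js}) : Ordinal) = β
    rw [OrderIso.apply_symm_apply]
  set e : ℕ → Ordinal := fun i => if h : i < k then b ⟨i, h⟩ else μ with he
  set c : ℕ → Subgroup G := fun i => C.ser (e i) ⊔ N with hc
  have he_lt : ∀ (i : ℕ) (h : i < k), e i = b ⟨i, h⟩ := by
    intro i h; simp [he, h]
  have he_ge : ∀ (i : ℕ), ¬ i < k → e i = μ := by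
    intro i h; simp [he, h]
  have heμ : ∀ i, e i ≤ μ := by
    intro i
    by_cases h : i < k
    · rw [he_lt i h]; exact (hbμ _).le
    · rw [he_ge i h]
  have hnojump : ∀ (lo hi : Ordinal), hi ≤ μ →
      (∀ j : Fin k, ¬(lo ≤ b j ∧ b j < hi)) →
      lo ≤ hi → C.ser hi ⊔ N = C.ser lo ⊔ N := by
    intro lo hi hhi hno hlohi
    apply const_between C hNn hNo hi hhi lo hlohi
    intro δ hδlo hδhi
    by_contra hne
    have hδJ : δ ∈ J := ⟨lt_of_lt_of_le hδhi hhi, hne⟩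
    obtain ⟨j, hj⟩ := hbsurj δ hδJ
    exact hno j ⟨hj ▸ hδlo, hj ▸ hδhi⟩
  have hHc0 : c 0 = ⊤ := by
    have h1 : C.ser (e 0) ⊔ N = C.ser 0 ⊔ N := by
      apply hnojump 0 (e 0) (heμ 0)
      · intro j hconj
        by_cases hk0 : 0 < k
        · rw [he_lt 0 hk0] at hconj
          have hle : (⟨0, hk0⟩ : Fin k) ≤ j := by
            rw [Fin.le_def]; exact Nat.zero_le _
          have : b ⟨0, hk0⟩ ≤ b j := by
            rcases eq_or_lt_of_le hle with h | h
            · rw [h]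
            · exact (hbmono h).le
          exact absurd hconj.2 (not_lt.mpr this)
        · exact absurd j.2 (by omega)
      · exact zero_le
    show C.ser (e 0) ⊔ N = ⊤
    rw [h1, C.ser_zero, top_sup_eq]
  have hHck : c k = N := by
    show C.ser (e k) ⊔ N = N
    rw [he_ge k (lt_irrefl k), C.ser_last, bot_sup_eq]
  have hstep : ∀ i : Fin k, (CompStep (c i.1) (c (i.1 + 1)) ∧
      QIso (c i.1) (c (i.1 + 1)) (C.ser (b i)) (C.ser (b i + 1))) := by
    intro i
    have hci : c i.1 = C.ser (b i) ⊔ N := by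
      show C.ser (e i.1) ⊔ N = _
      rw [he_lt i.1 i.2]
    have hbi1 : b i + 1 ≤ e (i.1 + 1) := by
      by_cases h : i.1 + 1 < k
      · rw [he_lt _ h]
        have : b i < b ⟨i.1 + 1, h⟩ := hbmono (by
          rw [Fin.lt_def]; exact Nat.lt_succ_self _)
        rwa [Ordinal.add_one_eq_succ, Order.succ_le_iff]
      · rw [he_ge _ h, Ordinal.add_one_eq_succ, Order.succ_le_iff]
        exact hbμ i
    have hci1 : c (i.1 + 1) = C.ser (b i + 1) ⊔ N := by
      show C.ser (e (i.1 + 1)) ⊔ N = _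
      apply hnojump (b i + 1) (e (i.1 + 1)) (heμ _) ?_ hbi1
      intro j hconj
      have hij : i < j := by
        have hbij : b i < b j := by
          have := hconj.1
          rwa [Ordinal.add_one_eq_succ, Order.succ_le_iff] at this
        by_contra hle
        rcases eq_or_lt_of_le (not_lt.mp hle : j ≤ i) with h | h
        · rw [h] at hbij; exact lt_irrefl _ hbij
        · exact lt_asymm hbij (hbmono h)
      rw [Fin.lt_def] at hij
      have hj2 := hconj.2
      by_cases h : i.1 + 1 < k
      · rw [he_lt _ h] at hj2
        have : j < (⟨i.1 + 1, h⟩ : Fin k) := by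
          by_contra hge
          have hle2 : (⟨i.1 + 1, h⟩ : Fin k) ≤ j := not_lt.mp hge
          have : b ⟨i.1 + 1, h⟩ ≤ b j := by
            rcases eq_or_lt_of_le hle2 with h' | h'
            · rw [h']
            · exact (hbmono h').le
          exact absurd hj2 (not_lt.mpr this)
        rw [Fin.lt_def] at this
        have h2 : j.1 < i.1 + 1 := this
        omega
      · rw [he_ge _ h] at hj2
        have := j.2
        omega
    rcases succ_sup_dichotomy C hNn (hbμ i) with heq | hgood
    · exact absurd heq (hbJ i).2
    · rw [hci, hci1]
      exact hgood
  refine ⟨k, c, hHc0, hHck, ?_, ?_, ?_⟩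
  · intro i hi
    exact (hstep ⟨i, hi⟩).1
  · intro i hi
    exact ⟨b ⟨i, hi⟩, hbμ _, (hstep ⟨i, hi⟩).2⟩
  · intro β hβ hinf
    have hβJ : β ∈ J := by
      refine ⟨hβ, ?_⟩
      intro heq
      have hserle : C.ser β ≤ C.ser (β + 1) := by
        intro a ha
        have : a ∈ C.ser (β + 1) ⊔ N := heq ▸ Subgroup.mem_sup_left ha
        obtain ⟨x, hx, n, hn, hxn⟩ := mem_sup_of_normal_prod this
        have hβ1β : C.ser (β + 1) ≤ C.ser β := (C.simpleFactor β hβ).1.le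
        have hnser : x⁻¹ * a ∈ C.ser β := Subgroup.mul_mem _ (inv_mem (hβ1β hx)) ha
        have hninf : x⁻¹ * a ∈ C.ser β ⊓ N := by
          refine Subgroup.mem_inf.2 ⟨hnser, ?_⟩
          have : x⁻¹ * a = n := by rw [← hxn]; group
          rw [this]; exact hn
        have h2 : a = x * (x⁻¹ * a) := by group
        rw [h2]
        exact Subgroup.mul_mem _ hx (hinf hninf)
      exact absurd hserle (C.simpleFactor β hβ).1.not_ge
    obtain ⟨i, hi⟩ := hbsurj β hβJ
    refine ⟨i.1, i.2, ?_⟩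
    rw [← hi]
    exact (hstep i).2

end Chain

section Separate

set_option linter.unusedSectionVars false

variable {G : Type*} [Group G] [TopologicalSpace G] [IsTopologicalGroup G]
    [CompactSpace G] [T2Space G] [TotallyDisconnectedSpace G]
    {μ : Ordinal} (C : CompSeries G μ ⊤)

theorem exists_open_normal_separating {α : Ordinal} (hα : α < μ) :
    ∃ N : Subgroup G, N.Normal ∧ IsOpen (N : Set G) ∧ C.ser α ⊓ N ≤ C.ser (α + 1) := by
  set A := C.ser α with hA
  set B := C.ser (α + 1) with hB
  haveI : CompactSpace ↥A := isCompact_iff_compactSpace.mp ((C.isClosed' α).isCompact)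
  set B' : Subgroup ↥A := B.subgroupOf A with hB'
  haveI : B'.FiniteIndex := ⟨C.finiteFactor α hα⟩
  have hB'closed : IsClosed (B' : Set ↥A) :=
    (C.isClosed' (α + 1)).preimage continuous_subtype_val
  have hB'open : IsOpen (B' : Set ↥A) :=
    Subgroup.isOpen_of_isClosed_of_finiteIndex B' hB'closed
  have hABclosed : IsClosed ((A : Set G) \ (B : Set G)) := by
    have hcomp : IsCompact ((Subtype.val : ↥A → G) '' ((B' : Set ↥A)ᶜ)) :=
      (hB'open.isClosed_compl.isCompact).image continuous_subtype_val
    have heq : (Subtype.val : ↥A → G) '' ((B' : Set ↥A)ᶜ) = (A : Set G) \ (B : Set G) := by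
      ext g
      constructor
      · rintro ⟨x, hx, rfl⟩
        exact ⟨x.2, by simpa [hB', Subgroup.mem_subgroupOf] using hx⟩
      · rintro ⟨hgA, hgB⟩
        exact ⟨⟨g, hgA⟩, by simpa [hB', Subgroup.mem_subgroupOf] using hgB, rfl⟩
    rw [heq] at hcomp
    exact hcomp.isClosed
  have h1 : (1 : G) ∈ ((A : Set G) \ (B : Set G))ᶜ := fun h => h.2 (one_mem B)
  obtain ⟨W, hWclopen, h1W, hWsub⟩ :=
    compact_exists_isClopen_in_isOpen hABclosed.isOpen_compl h1
  obtain ⟨H, hH⟩ :=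
    IsTopologicalGroup.exist_openNormalSubgroup_sub_clopen_nhds_of_one hWclopen h1W
  refine ⟨H.toSubgroup, H.isNormal', H.toOpenSubgroup.isOpen, ?_⟩
  intro g hg
  obtain ⟨hgA, hgN⟩ := Subgroup.mem_inf.mp hg
  have : g ∈ ((A : Set G) \ (B : Set G))ᶜ := hWsub (hH hgN)
  by_contra hgB
  exact this ⟨hgA, hgB⟩

end Separate

/-- Every factor `G_α/G_{α+1}` of a composition series of a profinite
group `G` occurs as a composition factor of some finite continuous quotient of `G`
(a quotient by an open normal subgroup), and conversely every composition factor of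
every finite continuous quotient of `G` is isomorphic to some factor `G_α/G_{α+1}`.
In particular the set of composition factors is independent of the series. -/
theorem composition_factors_eq_factors_of_finite_quotients
    {G : Type*} [Group G] [TopologicalSpace G] [IsTopologicalGroup G]
    [CompactSpace G] [T2Space G] [TotallyDisconnectedSpace G]
    {μ : Ordinal} (C : CompSeries G μ ⊤) :
    (∀ α < μ, ∃ N : Subgroup G, N.Normal ∧ IsOpen (N : Set G) ∧
      ∃ (n : ℕ) (c : ℕ → Subgroup G), c 0 = ⊤ ∧ c n = N ∧
        (∀ i < n, CompStep (c i) (c (i + 1))) ∧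
        ∃ i < n, StepIso (c i) (c (i + 1)) (C.ser α) (C.ser (α + 1))) ∧
    (∀ N : Subgroup G, N.Normal → IsOpen (N : Set G) →
      ∀ (n : ℕ) (c : ℕ → Subgroup G), c 0 = ⊤ → c n = N →
        (∀ i < n, CompStep (c i) (c (i + 1))) →
        ∀ i < n, ∃ α < μ, StepIso (c i) (c (i + 1)) (C.ser α) (C.ser (α + 1))) := by
  constructor
  · intro α hα
    obtain ⟨N, hNn, hNo, hsep⟩ := exists_open_normal_separating C hα
    obtain ⟨k, c, hc0, hck, hsteps, _, hfind⟩ := canonical_chain C hNn hNo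
    obtain ⟨i, hik, hq⟩ := hfind α hα hsep
    refine ⟨N, hNn, hNo, k, c, hc0, hck, hsteps, i, hik, ?_⟩
    haveI : ((C.ser (α + 1)).subgroupOf (C.ser α)).FiniteIndex := ⟨C.finiteFactor α hα⟩
    exact hq.stepIso inferInstance
  · intro N hNn hNo n c hc0 hcn hsteps i hin
    obtain ⟨k, c', hc'0, hc'k, hsteps', hq', _⟩ := canonical_chain C hNn hNo
    set s₁ : CompositionSeries (Subgroup G) :=
      { length := n
        toFun := fun j => c (n - j.1)
        step := fun j => by
          show CompStep (c (n - (j.1 + 1))) (c (n - j.1))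
          have h1 : n - j.1 = (n - j.1 - 1) + 1 := by omega
          have h2 : n - (j.1 + 1) = n - j.1 - 1 := by omega
          rw [h1, h2]
          exact hsteps (n - j.1 - 1) (by omega) } with hs₁
    set s₂ : CompositionSeries (Subgroup G) :=
      { length := k
        toFun := fun j => c' (k - j.1)
        step := fun j => by
          show CompStep (c' (k - (j.1 + 1))) (c' (k - j.1))
          have h1 : k - j.1 = (k - j.1 - 1) + 1 := by omega
          have h2 : k - (j.1 + 1) = k - j.1 - 1 := by omega
          rw [h1, h2]
          exact hsteps' (k - j.1 - 1) (by omega) } with hs₂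
    have hhead : s₁.head = s₂.head := by
      show c (n - 0) = c' (k - 0)
      rw [Nat.sub_zero, Nat.sub_zero, hcn, hc'k]
    have hlast : s₁.last = s₂.last := by
      show c (n - n) = c' (k - k)
      rw [Nat.sub_self, Nat.sub_self, hc0, hc'0]
    obtain ⟨f, hf⟩ := CompositionSeries.jordan_holder s₁ s₂ hhead hlast
    set j : Fin n := ⟨n - 1 - i, by omega⟩ with hj
    have hj1 : (j : ℕ) = n - 1 - i := rfl
    have h0 : QIso (c (n - ((j : ℕ) + 1))) (c (n - (j : ℕ)))
        (c' (k - (((f j) : ℕ) + 1))) (c' (k - ((f j) : ℕ))) := by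
        have hsj : CompStep (c (n - ((j : ℕ) + 1))) (c (n - (j : ℕ))) := s₁.step j
        haveI := hsj.2.1
        rcases JordanHolderLattice.Iso.rel
            (fun p q : Subgroup G × Subgroup G => p = q ∨ QIso p.2 p.1 q.2 q.1)
            (Or.inl rfl)
            (fun h => h.elim (fun h => Or.inl h.symm) (fun h => Or.inr h.symm))
            (fun h h' => by
              rcases h with rfl | h
              · exact h'
              · rcases h' with rfl | h'
                · exact Or.inr h
                · exact Or.inr (h.trans h'))
            (fun {x y} h => by
              letI := h.2.1
              obtain ⟨ψ, hs, hk⟩ := second_iso_hom x y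
              have hnk : ((x ⊓ y).subgroupOf y).Normal := by rw [← hk]; exact ψ.normal_ker
              exact Or.inr (qiso_of_surjective hnk ψ hs hk).symm)
            (hf j) with h | h
        · obtain ⟨h1, h2⟩ := Prod.mk.inj h
          have h1' : c (n - (j : ℕ)) = c' (k - ((f j) : ℕ)) := h1
          have h2' : c (n - ((j : ℕ) + 1)) = c' (k - (((f j) : ℕ) + 1)) := h2
          rw [← h1', ← h2']
          exact ⟨⟨MulEquiv.refl _⟩⟩
        · exact h
    have e1 : n - ((j : ℕ) + 1) = i := by rw [hj1]; omega
    have e2 : n - (j : ℕ) = i + 1 := by rw [hj1]; omega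
    have hfjlt : ((f j) : ℕ) < k := (f j).isLt
    have e3 : k - ((f j) : ℕ) = (k - (((f j) : ℕ) + 1)) + 1 := by omega
    rw [e1, e2, e3] at h0
    obtain ⟨β, hβ, hqm⟩ := hq' (k - (((f j) : ℕ) + 1)) (by omega)
    refine ⟨β, hβ, ?_⟩
    haveI : ((C.ser (β + 1)).subgroupOf (C.ser β)).FiniteIndex := ⟨C.finiteFactor β hβ⟩
    exact (h0.trans hqm).stepIso inferInstance
end

section
/- Let G be a profinite group, S a finite simple group, and let (G_α)_{α ≤ μ} and (H_λ)_{λ ≤ Δ} be two composition series for G. Then the cardinality of {α < μ : G_α/G_{α+1} ≅ S} equals the cardinality of {λ < Δ : H_λ/H_{λ+1} ≅ S}. -/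
open scoped Pointwise

namespace PJH

lemma mem_join_decomp {H : Type*} [Group H] {N Y : Subgroup H} (hN : N.Normal) {x : H}
    (hx : x ∈ N ⊔ Y) : ∃ n ∈ N, ∃ y ∈ Y, x = n * y := by
  letI := hN
  have hx' : x ∈ (↑N * ↑Y : Set H) := by
    rw [← Subgroup.normal_mul]; exact_mod_cast hx
  obtain ⟨n, hn, y, hy, h⟩ := hx'
  exact ⟨n, hn, y, hy, h.symm⟩

lemma conj_join_mem {H : Type*} [Group H] {N Y : Subgroup H} (hN : N.Normal) (g : H)
    (hgY : ∀ y ∈ Y, g * y * g⁻¹ ∈ N ⊔ Y) :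
    ∀ m ∈ N ⊔ Y, g * m * g⁻¹ ∈ N ⊔ Y := by
  intro m hm
  obtain ⟨n, hn, y, hy, rfl⟩ := mem_join_decomp hN hm
  have h1 : g * n * g⁻¹ ∈ N ⊔ Y := le_sup_left (a := N) (hN.conj_mem n hn g)
  have h2 := hgY y hy
  have hrw : g * (n * y) * g⁻¹ = (g * n * g⁻¹) * (g * y * g⁻¹) := by group
  rw [hrw]; exact mul_mem h1 h2


section Transfer

variable {G : Type*} [Group G]

lemma factorIso_transfer {S : Type*} [Group S] {A B C D : Subgroup G}
    (hB : (B.subgroupOf A).Normal) (hD : (D.subgroupOf C).Normal)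
    (P2 : A ⊓ D ≤ B)
    (P1 : B.subgroupOf A ⊔ C.subgroupOf A = ⊤)
    (Q1 : D.subgroupOf C ⊔ A.subgroupOf C = ⊤)
    (Q2 : C ⊓ B ≤ D)
    (hfi : FactorIso A B S) : FactorIso C D S := by
  obtain ⟨φ, hsurj, hker⟩ := hfi
  have decomp : ∀ c : ↥C, ∃ p : ↥C × ↥C,
      p.1 ∈ D.subgroupOf C ∧ (p.2 : G) ∈ A ∧ c = p.1 * p.2 := by
    intro c
    have hc : c ∈ D.subgroupOf C ⊔ A.subgroupOf C := by rw [Q1]; trivial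
    obtain ⟨n, hn, y, hy, h⟩ := mem_join_decomp hD hc
    exact ⟨(n, y), hn, Subgroup.mem_subgroupOf.mp hy, h⟩
  choose p hp1 hp2 hp3 using decomp
  set ψf : ↥C → S := fun c => φ ⟨((p c).2 : G), hp2 c⟩ with hψf
  -- the key well-definedness lemma
  have key : ∀ (c d a : ↥C), d ∈ D.subgroupOf C → ∀ ha : (a : G) ∈ A,
      c = d * a → ψf c = φ ⟨(a : G), ha⟩ := by
    intro c d a hd ha hc
    have heq : (p c).1 * (p c).2 = d * a := (hp3 c).symm.trans hc
    have h1 : (p c).2 * a⁻¹ = (p c).1⁻¹ * d := by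
      have : (p c).2 = (p c).1⁻¹ * (d * a) := by
        rw [← heq]; group
      rw [this]; group
    have hwD : (((p c).2 * a⁻¹ : ↥C) : G) ∈ D := by
      have : (p c).2 * a⁻¹ ∈ D.subgroupOf C := by
        rw [h1]; exact mul_mem (inv_mem (hp1 c)) hd
      exact Subgroup.mem_subgroupOf.mp this
    have hwA : (((p c).2 * a⁻¹ : ↥C) : G) ∈ A := by
      push_cast
      exact mul_mem (hp2 c) (inv_mem ha)
    have hwB : (((p c).2 * a⁻¹ : ↥C) : G) ∈ B := P2 ⟨hwA, hwD⟩
    -- in ↥A : ⟨p c .2⟩ = w * ⟨a⟩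
    have hsplit : (⟨((p c).2 : G), hp2 c⟩ : ↥A)
        = (⟨(((p c).2 * a⁻¹ : ↥C) : G), hwA⟩ : ↥A) * ⟨(a : G), ha⟩ := by
      ext; push_cast; group
    have hkerw : φ (⟨(((p c).2 * a⁻¹ : ↥C) : G), hwA⟩ : ↥A) = 1 := by
      have : (⟨(((p c).2 * a⁻¹ : ↥C) : G), hwA⟩ : ↥A) ∈ φ.ker := by
        rw [hker]; exact Subgroup.mem_subgroupOf.mpr hwB
      exact this
    show φ ⟨((p c).2 : G), hp2 c⟩ = φ ⟨(a : G), ha⟩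
    rw [hsplit, map_mul, hkerw, one_mul]
  refine ⟨{ toFun := ψf, map_one' := ?_, map_mul' := ?_ }, ?_, ?_⟩
  · have := key 1 1 1 (one_mem _) (by simpa using A.one_mem) (by group)
    rw [this]
    convert map_one φ using 2
    exact rfl
  · intro c₁ c₂
    have ha12 : ((((p c₁).2 * (p c₂).2 : ↥C)) : G) ∈ A := by
      push_cast; exact mul_mem (hp2 c₁) (hp2 c₂)
    have hdd : (p c₁).1 * ((p c₁).2 * (p c₂).1 * ((p c₁).2)⁻¹) ∈ D.subgroupOf C :=
      mul_mem (hp1 c₁) (hD.conj_mem _ (hp1 c₂) _)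
    have hdec : c₁ * c₂ = ((p c₁).1 * ((p c₁).2 * (p c₂).1 * ((p c₁).2)⁻¹))
        * ((p c₁).2 * (p c₂).2) := by
      conv_lhs => rw [hp3 c₁, hp3 c₂]
      group
    have h12 := key (c₁ * c₂) _ _ hdd ha12 hdec
    have hmul : (⟨((((p c₁).2 * (p c₂).2 : ↥C)) : G), ha12⟩ : ↥A)
        = ⟨((p c₁).2 : G), hp2 c₁⟩ * ⟨((p c₂).2 : G), hp2 c₂⟩ := by
      ext; push_cast; ring_nf
    show ψf (c₁ * c₂) = ψf c₁ * ψf c₂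
    rw [h12, hmul, map_mul]
  · -- surjective
    intro s
    obtain ⟨a₀, rfl⟩ := hsurj s
    have ha₀ : a₀ ∈ B.subgroupOf A ⊔ C.subgroupOf A := by rw [P1]; trivial
    obtain ⟨n, hn, y, hy, hdec⟩ := mem_join_decomp hB ha₀
    have hyC : ((y : G)) ∈ C := Subgroup.mem_subgroupOf.mp hy
    refine ⟨⟨(y : G), hyC⟩, ?_⟩
    have h1 := key ⟨(y : G), hyC⟩ 1 ⟨(y : G), hyC⟩ (one_mem _) y.2 (by group)
    show ψf _ = φ a₀
    rw [h1]
    have : (⟨((⟨(y : G), hyC⟩ : ↥C) : G), y.2⟩ : ↥A) = y := rfl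
    rw [this, hdec, map_mul]
    have : φ n = 1 := by
      have : n ∈ φ.ker := by rw [hker]; exact hn
      exact this
    rw [this, one_mul]
  · -- kernel
    ext c
    simp only [MonoidHom.mem_ker]
    constructor
    · intro hc
      have hx : (((p c).2 : G)) ∈ B := by
        have : (⟨((p c).2 : G), hp2 c⟩ : ↥A) ∈ φ.ker := hc
        rw [hker] at this
        exact Subgroup.mem_subgroupOf.mp this
      have hxD : (p c).2 ∈ D.subgroupOf C := by
        refine Subgroup.mem_subgroupOf.mpr (Q2 ⟨(p c).2.2, hx⟩)
      rw [hp3 c]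
      exact mul_mem (hp1 c) hxD
    · intro hc
      have h1 := key c c 1 hc (by simpa using A.one_mem) (by group)
      show ψf c = 1
      rw [h1]
      convert map_one φ using 2
      exact rfl


end Transfer

section Series

variable {G : Type*} [Group G] [TopologicalSpace G]
variable {μ Δ : Ordinal.{0}}

lemma succ_le_of_lt' {a b : Ordinal} (h : a < b) : a + 1 ≤ b := by
  rw [Ordinal.add_one_eq_succ, Order.succ_le_iff]; exact h

lemma lt_succ' (a : Ordinal) : a < a + 1 := by
  rw [Ordinal.add_one_eq_succ]; exact Order.lt_succ a

lemma ser_antitone (C : CompSeries G μ ⊤) {a b : Ordinal} (h : a ≤ b) (hb : b ≤ μ) :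
    C.ser b ≤ C.ser a := by
  rcases h.lt_or_eq with h | rfl
  · exact (C.strictAnti' h hb).le
  · exact le_rfl

lemma ser_succ_lt (C : CompSeries G μ ⊤) {a : Ordinal} (ha : a < μ) :
    C.ser (a + 1) < C.ser a :=
  C.strictAnti' (lt_succ' a) (succ_le_of_lt' ha)

/-- The jump relation: at index `a` of the first series, the interpolated chain
`B(A ∩ H_b)` jumps exactly between `b` and `b+1`. -/
def JumpAt (C₁ : CompSeries G μ ⊤) (C₂ : CompSeries G Δ ⊤) (a b : Ordinal) : Prop :=
  ((C₁.ser (a + 1)).subgroupOf (C₁.ser a) ⊔ (C₂.ser b).subgroupOf (C₁.ser a) = ⊤) ∧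
    C₁.ser a ⊓ C₂.ser (b + 1) ≤ C₁.ser (a + 1)

/-- From the jump-top condition and `A ⊓ C ≤ B`, conclude `A ≤ B`. -/
lemma le_of_jumptop {A B C : Subgroup G} (hB : (B.subgroupOf A).Normal)
    (htop : B.subgroupOf A ⊔ C.subgroupOf A = ⊤) (hAC : A ⊓ C ≤ B) : A ≤ B := by
  intro x hx
  have : (⟨x, hx⟩ : ↥A) ∈ B.subgroupOf A ⊔ C.subgroupOf A := by rw [htop]; trivial
  obtain ⟨n, hn, y, hy, hd⟩ := mem_join_decomp hB this
  have hnB : ((n : G)) ∈ B := Subgroup.mem_subgroupOf.mp hn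
  have hyB : ((y : G)) ∈ B := hAC ⟨y.2, Subgroup.mem_subgroupOf.mp hy⟩
  have : x = (n : G) * (y : G) := by
    have := congrArg (Subtype.val) hd
    simpa using this
  rw [this]; exact mul_mem hnB hyB

lemma jump_lt_aux (C₁ : CompSeries G μ ⊤) (C₂ : CompSeries G Δ ⊤) {a lam lam' : Ordinal}
    (ha : a < μ) (hlam' : lam' ≤ Δ) (hle : lam + 1 ≤ lam')
    (h2 : C₁.ser a ⊓ C₂.ser (lam + 1) ≤ C₁.ser (a + 1))
    (htop : (C₁.ser (a + 1)).subgroupOf (C₁.ser a) ⊔ (C₂.ser lam').subgroupOf (C₁.ser a) = ⊤) :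
    False := by
  have hBn := C₁.succ_normal a ha
  have hser : C₂.ser lam' ≤ C₂.ser (lam + 1) := ser_antitone C₂ hle hlam'
  have hAC : C₁.ser a ⊓ C₂.ser lam' ≤ C₁.ser (a + 1) := by
    rintro x ⟨h1, h2'⟩
    exact h2 ⟨h1, hser h2'⟩
  exact (ser_succ_lt C₁ ha).not_ge (le_of_jumptop hBn htop hAC)

lemma jump_unique (C₁ : CompSeries G μ ⊤) (C₂ : CompSeries G Δ ⊤) {a lam lam' : Ordinal}
    (ha : a < μ) (hlam : lam < Δ) (hlam' : lam' < Δ)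
    (h : JumpAt C₁ C₂ a lam) (h' : JumpAt C₁ C₂ a lam') : lam = lam' := by
  rcases lt_trichotomy lam lam' with hl | hl | hl
  · exact (jump_lt_aux C₁ C₂ ha hlam'.le (succ_le_of_lt' hl) h.2 h'.1).elim
  · exact hl
  · exact (jump_lt_aux C₁ C₂ ha hlam.le (succ_le_of_lt' hl) h'.2 h.1).elim

end Series

section Topo

variable {G : Type*} [Group G] [TopologicalSpace G] [IsTopologicalGroup G] [CompactSpace G]
variable {μ Δ : Ordinal.{0}}

/-- Continuity of the interpolated chain at limit ordinals, via compactness. -/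
lemma limit_top (C₁ : CompSeries G μ ⊤) (C₂ : CompSeries G Δ ⊤) {a lam : Ordinal}
    (ha : a < μ) (hlam : lam ≤ Δ) (hl : Order.IsSuccLimit lam)
    (htop : ∀ ρ < lam,
      (C₁.ser (a + 1)).subgroupOf (C₁.ser a) ⊔ (C₂.ser ρ).subgroupOf (C₁.ser a) = ⊤) :
    (C₁.ser (a + 1)).subgroupOf (C₁.ser a) ⊔ (C₂.ser lam).subgroupOf (C₁.ser a) = ⊤ := by
  have hBn := C₁.succ_normal a ha
  haveI : CompactSpace ↥(C₁.ser a) :=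
    isCompact_iff_compactSpace.mp (C₁.isClosed' a).isCompact
  set A := C₁.ser a with hA
  rw [Subgroup.eq_top_iff']
  intro x
  -- the family of closed sets
  set F : {ρ : Ordinal // ρ < lam} → Set ↥A :=
    fun ρ => {y : ↥A | (y : G) ∈ C₂.ser ρ.1 ∧ (x : G) * (y : G)⁻¹ ∈ C₁.ser (a + 1)} with hF
  haveI : Nonempty {ρ : Ordinal // ρ < lam} := ⟨⟨0, hl.pos⟩⟩
  have hclosed : ∀ ρ, IsClosed (F ρ) := by
    intro ρ
    have h1 : Continuous (fun y : ↥A => (y : G)) := continuous_subtype_val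
    have h2 : Continuous (fun y : ↥A => (x : G) * (y : G)⁻¹) :=
      continuous_const.mul (h1.inv)
    exact ((C₂.isClosed' ρ.1).preimage h1).inter ((C₁.isClosed' (a + 1)).preimage h2)
  have hcompact : ∀ ρ, IsCompact (F ρ) := fun ρ => (hclosed ρ).isCompact
  have hne : ∀ ρ, (F ρ).Nonempty := by
    rintro ⟨ρ, hρ⟩
    have hx : x ∈ (C₁.ser (a + 1)).subgroupOf A ⊔ (C₂.ser ρ).subgroupOf A := by
      rw [htop ρ hρ]; trivial
    obtain ⟨n, hn, y, hy, hd⟩ := mem_join_decomp hBn hx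
    refine ⟨y, Subgroup.mem_subgroupOf.mp hy, ?_⟩
    have : (x : G) * (y : G)⁻¹ = (n : G) := by
      have := congrArg (Subtype.val) hd
      simp only [Subgroup.coe_mul] at this
      rw [this]; group
    rw [this]; exact Subgroup.mem_subgroupOf.mp hn
  have hdir : Directed (fun s t : Set ↥A => s ⊇ t) F := by
    rintro ⟨ρ, hρ⟩ ⟨σ, hσ⟩
    rcases le_total ρ σ with h | h
    · exact ⟨⟨σ, hσ⟩, fun y hy => ⟨ser_antitone C₂ h (hσ.le.trans hlam) hy.1, hy.2⟩,
        fun y hy => hy⟩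
    · exact ⟨⟨ρ, hρ⟩, fun y hy => hy,
        fun y hy => ⟨ser_antitone C₂ h (hρ.le.trans hlam) hy.1, hy.2⟩⟩
  obtain ⟨y, hy⟩ := IsCompact.nonempty_iInter_of_directed_nonempty_isCompact_isClosed
    F hdir hne hcompact hclosed
  simp only [Set.mem_iInter] at hy
  have hylam : (y : G) ∈ C₂.ser lam := by
    rw [C₂.limit_inter lam hlam hl]
    rw [Subgroup.mem_iInf]
    intro β
    rw [Subgroup.mem_iInf]
    intro hβ
    exact (hy ⟨β, hβ⟩).1
  have h1 : x * y⁻¹ ∈ (C₁.ser (a + 1)).subgroupOf A := by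
    refine Subgroup.mem_subgroupOf.mpr ?_
    have : ((x * y⁻¹ : ↥A) : G) = (x : G) * (y : G)⁻¹ := by push_cast; ring
    rw [this]
    exact (hy ⟨0, hl.pos⟩).2
  have h2 : y ∈ (C₂.ser lam).subgroupOf A := Subgroup.mem_subgroupOf.mpr hylam
  have hmm := mul_mem (le_sup_left (b := (C₂.ser lam).subgroupOf A) h1)
    (le_sup_right (a := (C₁.ser (a + 1)).subgroupOf A) h2)
  have hfin : x * y⁻¹ * y = x := by group
  rwa [hfin] at hmm

/-- Every step of the first series has a (unique) jump index against the second series. -/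
lemma exists_jump (C₁ : CompSeries G μ ⊤) (C₂ : CompSeries G Δ ⊤) {a : Ordinal}
    (ha : a < μ) : ∃ lam, lam < Δ ∧ JumpAt C₁ C₂ a lam := by
  have hBn := C₁.succ_normal a ha
  have hBA : C₁.ser (a + 1) < C₁.ser a := ser_succ_lt C₁ ha
  set A := C₁.ser a with hA
  set B := C₁.ser (a + 1) with hB
  set K : Ordinal → Subgroup ↥A := fun ρ => B.subgroupOf A ⊔ (C₂.ser ρ).subgroupOf A with hK
  set s : Set Ordinal := {ρ | ρ ≤ Δ ∧ K ρ ≠ ⊤} with hs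
  have hbotA : (⊥ : Subgroup G).subgroupOf A = ⊥ := Subgroup.bot_subgroupOf A
  have hΔs : Δ ∈ s := by
    refine ⟨le_rfl, ?_⟩
    have : K Δ = B.subgroupOf A := by
      rw [hK]
      simp only
      rw [C₂.ser_last, hbotA, sup_bot_eq]
    rw [this]
    intro h
    exact hBA.not_ge (Subgroup.subgroupOf_eq_top.mp h)
  set lamstar := sInf s with hlamstar
  have hmem : lamstar ∈ s := csInf_mem ⟨Δ, hΔs⟩
  have hlamΔ : lamstar ≤ Δ := hmem.1
  have hKne : K lamstar ≠ ⊤ := hmem.2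
  have hbelow : ∀ ρ < lamstar, K ρ = ⊤ := by
    intro ρ hρ
    have h1 : ρ ∉ s := notMem_of_lt_csInf' hρ
    have h2 : ρ ≤ Δ := (hρ.le.trans hlamΔ)
    by_contra h
    exact h1 ⟨h2, h⟩
  have h0 : lamstar ≠ 0 := by
    intro h
    apply hKne
    rw [h, hK]
    simp only
    rw [C₂.ser_zero]
    rw [Subgroup.subgroupOf_eq_top.mpr le_top]
    exact sup_top_eq _
  have hnotlim : ¬ Order.IsSuccLimit lamstar := by
    intro hl
    exact hKne (limit_top C₁ C₂ ha hlamΔ hl (fun ρ hρ => hbelow ρ hρ))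
  rcases Ordinal.zero_or_succ_or_isSuccLimit lamstar with h | ⟨lam0, hsucc⟩ | h
  · exact absurd h h0
  swap
  · exact absurd h hnotlim
  rw [← Ordinal.add_one_eq_succ, eq_comm] at hsucc
  have hlam0star : lam0 < lamstar := by rw [hsucc]; exact lt_succ' lam0
  have hlam0Δ : lam0 < Δ := lt_of_lt_of_le hlam0star hlamΔ
  have hlam0Δ' : lam0 + 1 ≤ Δ := by rw [← hsucc]; exact hlamΔ
  have Ktop : K lam0 = ⊤ := hbelow lam0 hlam0star
  have hKs : K (lam0 + 1) ≠ ⊤ := hsucc ▸ hKne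
  -- normality of the subgroup after the jump
  have hYle : C₂.ser (lam0 + 1) ≤ C₂.ser lam0 :=
    ser_antitone C₂ (lt_succ' lam0).le hlam0Δ'
  have hXnormal : (K (lam0 + 1)).Normal := by
    constructor
    intro n hn g
    have hg : g ∈ K lam0 := by rw [Ktop]; trivial
    obtain ⟨b, hb, z, hz, hgbz⟩ := mem_join_decomp hBn hg
    -- conjugation by elements of B.subgroupOf A preserves K (lam0+1)
    have conjB : ∀ b' ∈ B.subgroupOf A, ∀ m ∈ K (lam0 + 1), b' * m * b'⁻¹ ∈ K (lam0 + 1) := by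
      intro b' hb'
      refine conj_join_mem hBn b' ?_
      intro y hy
      have hcom : b' * (y * b'⁻¹ * y⁻¹) ∈ B.subgroupOf A :=
        mul_mem hb' (hBn.conj_mem _ (inv_mem hb') y)
      have hrw : b' * y * b'⁻¹ = (b' * (y * b'⁻¹ * y⁻¹)) * y := by group
      rw [hrw]
      exact mul_mem (le_sup_left (a := B.subgroupOf A) hcom)
        (le_sup_right (a := B.subgroupOf A) hy)
    have conjZ : ∀ z' ∈ (C₂.ser lam0).subgroupOf A, ∀ m ∈ K (lam0 + 1),
        z' * m * z'⁻¹ ∈ K (lam0 + 1) := by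
      intro z' hz'
      refine conj_join_mem hBn z' ?_
      intro y hy
      have hyG : ((y : G)) ∈ C₂.ser (lam0 + 1) := Subgroup.mem_subgroupOf.mp hy
      have hz'G : ((z' : G)) ∈ C₂.ser lam0 := Subgroup.mem_subgroupOf.mp hz'
      have hnorm2 := C₂.succ_normal lam0 hlam0Δ
      have hconj := hnorm2.conj_mem ⟨(y : G), hYle hyG⟩
        (Subgroup.mem_subgroupOf.mpr hyG) ⟨(z' : G), hz'G⟩
      have hconjG : ((z' : G)) * (y : G) * ((z' : G))⁻¹ ∈ C₂.ser (lam0 + 1) :=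
        Subgroup.mem_subgroupOf.mp hconj
      have : z' * y * z'⁻¹ ∈ (C₂.ser (lam0 + 1)).subgroupOf A := by
        refine Subgroup.mem_subgroupOf.mpr ?_
        have hcoe : ((z' * y * z'⁻¹ : ↥A) : G) = (z' : G) * (y : G) * ((z' : G))⁻¹ := by
          push_cast; ring_nf
        rw [hcoe]; exact hconjG
      exact le_sup_right (a := B.subgroupOf A) this
    have h1 := conjZ z hz n hn
    have h2 := conjB b hb _ h1
    have hrw : g * n * g⁻¹ = b * (z * n * z⁻¹) * b⁻¹ := by rw [hgbz]; group
    rw [hrw]; exact h2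
  -- maximality via the simple factor
  obtain ⟨hlt, hnorm, hmax⟩ := C₁.simpleFactor a ha
  have hXeq : K (lam0 + 1) = B.subgroupOf A := by
    rcases hmax (K (lam0 + 1)) hXnormal le_sup_left with h | h
    · exact h
    · exact absurd h hKs
  refine ⟨lam0, hlam0Δ, Ktop, ?_⟩
  rintro x ⟨hxA, hxD⟩
  have : (⟨x, hxA⟩ : ↥A) ∈ (C₂.ser (lam0 + 1)).subgroupOf A :=
    Subgroup.mem_subgroupOf.mpr hxD
  have h2 : (⟨x, hxA⟩ : ↥A) ∈ K (lam0 + 1) := le_sup_right (a := B.subgroupOf A) this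
  rw [hXeq] at h2
  exact Subgroup.mem_subgroupOf.mp h2

lemma jump_cross (C₁ : CompSeries G μ ⊤) (C₂ : CompSeries G Δ ⊤) {a lam : Ordinal}
    (ha : a < μ) (hlam : lam < Δ) (h : JumpAt C₁ C₂ a lam) : JumpAt C₂ C₁ lam a := by
  obtain ⟨b0, hb0, hJ⟩ := exists_jump C₂ C₁ hlam
  have hDn := C₂.succ_normal lam hlam
  have hBn := C₁.succ_normal a ha
  have hBA : C₁.ser (a + 1) ≤ C₁.ser a := (ser_succ_lt C₁ ha).le
  suffices hba : b0 = a by rwa [hba] at hJ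
  by_contra hne
  rcases lt_or_gt_of_ne hne with hlt | hgt
  · -- b0 < a
    have hser : C₁.ser a ≤ C₁.ser (b0 + 1) := ser_antitone C₁ (succ_le_of_lt' hlt) ha.le
    have hAC : C₁.ser a ⊓ C₂.ser lam ≤ C₁.ser (a + 1) := by
      rintro x ⟨hxA, hxC⟩
      have hxD : x ∈ C₂.ser (lam + 1) := hJ.2 ⟨hxC, hser hxA⟩
      exact h.2 ⟨hxA, hxD⟩
    exact (ser_succ_lt C₁ ha).not_ge (le_of_jumptop hBn h.1 hAC)
  · -- a < b0
    have hser : C₁.ser b0 ≤ C₁.ser (a + 1) := ser_antitone C₁ (succ_le_of_lt' hgt) hb0.le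
    have htop' : (C₂.ser (lam + 1)).subgroupOf (C₂.ser lam)
        ⊔ (C₁.ser (a + 1)).subgroupOf (C₂.ser lam) = ⊤ := by
      refine top_unique ?_
      rw [← hJ.1]
      exact sup_le_sup_left (Subgroup.comap_mono hser) _
    have hAC : C₁.ser a ⊓ C₂.ser lam ≤ C₁.ser (a + 1) := by
      rintro x ⟨hxA, hxC⟩
      have hx : (⟨x, hxC⟩ : ↥(C₂.ser lam)) ∈ (C₂.ser (lam + 1)).subgroupOf (C₂.ser lam)
          ⊔ (C₁.ser (a + 1)).subgroupOf (C₂.ser lam) := by rw [htop']; trivial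
      obtain ⟨d, hd, y, hy, hdec⟩ := mem_join_decomp hDn hx
      have hyB : ((y : G)) ∈ C₁.ser (a + 1) := Subgroup.mem_subgroupOf.mp hy
      have hxdy : x = (d : G) * (y : G) := by
        have := congrArg (Subtype.val) hdec
        simpa using this
      have hdA : ((d : G)) ∈ C₁.ser a := by
        have : (d : G) = x * (y : G)⁻¹ := by rw [hxdy]; group
        rw [this]
        exact mul_mem hxA (inv_mem (hBA hyB))
      have hdB : ((d : G)) ∈ C₁.ser (a + 1) :=
        h.2 ⟨hdA, Subgroup.mem_subgroupOf.mp hd⟩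
      rw [hxdy]
      exact mul_mem hdB hyB
    exact (ser_succ_lt C₁ ha).not_ge (le_of_jumptop hBn h.1 hAC)

end Topo


section Extra

variable {G : Type*} [Group G] [TopologicalSpace G] [IsTopologicalGroup G] [CompactSpace G]
variable {μ Δ : Ordinal.{0}}

lemma jump_factorIso {S : Type*} [Group S] (C₁ : CompSeries G μ ⊤) (C₂ : CompSeries G Δ ⊤)
    {a lam : Ordinal} (ha : a < μ) (hlam : lam < Δ) (h : JumpAt C₁ C₂ a lam)
    (hfi : FactorIso (C₁.ser a) (C₁.ser (a + 1)) S) :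
    FactorIso (C₂.ser lam) (C₂.ser (lam + 1)) S := by
  have hc := jump_cross C₁ C₂ ha hlam h
  exact factorIso_transfer (C₁.succ_normal a ha) (C₂.succ_normal lam hlam)
    h.2 h.1 hc.1 hc.2 hfi

end Extra

end PJH

/-- **profinite Jordan–Hölder.** For two composition series of a profinite
group `G` and a finite simple group `S`, the set of indices whose factor is isomorphic
to `S` has the same cardinality in both series. -/
theorem profinite_jordan_holder
    {G : Type*} [Group G] [TopologicalSpace G] [IsTopologicalGroup G]
    [CompactSpace G] [T2Space G] [TotallyDisconnectedSpace G]
    {μ Δ : Ordinal.{0}} (C₁ : CompSeries G μ ⊤) (C₂ : CompSeries G Δ ⊤)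
    (S : Type*) [Group S] [Finite S] [IsSimpleGroup S] :
    Cardinal.mk {α : Ordinal.{0} // α < μ ∧ FactorIso (C₁.ser α) (C₁.ser (α + 1)) S} =
      Cardinal.mk {β : Ordinal.{0} // β < Δ ∧ FactorIso (C₂.ser β) (C₂.ser (β + 1)) S} := by
  classical
  let f : ∀ a : Ordinal, a < μ → Ordinal := fun a ha => (PJH.exists_jump C₁ C₂ ha).choose
  have hf : ∀ (a : Ordinal) (ha : a < μ),
      f a ha < Δ ∧ PJH.JumpAt C₁ C₂ a (f a ha) :=
    fun a ha => (PJH.exists_jump C₁ C₂ ha).choose_spec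
  let g : ∀ b : Ordinal, b < Δ → Ordinal := fun b hb => (PJH.exists_jump C₂ C₁ hb).choose
  have hg : ∀ (b : Ordinal) (hb : b < Δ),
      g b hb < μ ∧ PJH.JumpAt C₂ C₁ b (g b hb) :=
    fun b hb => (PJH.exists_jump C₂ C₁ hb).choose_spec
  have hgf : ∀ (a : Ordinal) (ha : a < μ), g (f a ha) (hf a ha).1 = a := by
    intro a ha
    have hc := PJH.jump_cross C₁ C₂ ha (hf a ha).1 (hf a ha).2
    exact PJH.jump_unique C₂ C₁ (hf a ha).1 (hg (f a ha) (hf a ha).1).1 ha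
      (hg (f a ha) (hf a ha).1).2 hc
  have hfg : ∀ (b : Ordinal) (hb : b < Δ), f (g b hb) (hg b hb).1 = b := by
    intro b hb
    have hc := PJH.jump_cross C₂ C₁ hb (hg b hb).1 (hg b hb).2
    exact PJH.jump_unique C₁ C₂ (hg b hb).1 (hf (g b hb) (hg b hb).1).1 hb
      (hf (g b hb) (hg b hb).1).2 hc
  refine Cardinal.mk_congr
    ⟨fun x => ⟨f x.1 x.2.1, (hf x.1 x.2.1).1,
        PJH.jump_factorIso C₁ C₂ x.2.1 (hf x.1 x.2.1).1 (hf x.1 x.2.1).2 x.2.2⟩,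
      fun y => ⟨g y.1 y.2.1, (hg y.1 y.2.1).1,
        PJH.jump_factorIso C₂ C₁ y.2.1 (hg y.1 y.2.1).1 (hg y.1 y.2.1).2 y.2.2⟩,
      ?_, ?_⟩
  · intro x
    exact Subtype.ext (hgf x.1 x.2.1)
  · intro y
    exact Subtype.ext (hfg y.1 y.2.1)
end

section
/- Let G be a profinite group, A, B closed subgroups of G with B strictly contained in A, and let (H_α)_{α ≤ μ} be an accessible series from G to a closed subgroup H. If AH ≠ BH, then there exists an ordinal α < μ such that (A ∩ H_α)H_{α+1} ≠ (B ∩ H_α)H_{α+1}. -/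
open scoped Pointwise

lemma aux_step {G : Type*} [Group G] (A B Hα Hs : Subgroup G) (hBA : B ≤ A)
    (hsub : Hs ≤ Hα)
    (h1 : (A : Set G) * (Hα : Set G) = (B : Set G) * (Hα : Set G))
    (h2 : ((A ⊓ Hα : Subgroup G) : Set G) * (Hs : Set G)
        = ((B ⊓ Hα : Subgroup G) : Set G) * (Hs : Set G)) :
    (A : Set G) * (Hs : Set G) = (B : Set G) * (Hs : Set G) := by
  apply subset_antisymm
  · have hA : (A : Set G) ⊆ (B : Set G) * (Hs : Set G) := by
      intro a haA
      have : a ∈ (B : Set G) * (Hα : Set G) := by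
        rw [← h1]; exact ⟨a, haA, 1, one_mem _, mul_one a⟩
      obtain ⟨b, hb, k, hk, hbk⟩ := this
      have hkA : b⁻¹ * a ∈ (A ⊓ Hα : Subgroup G) := by
        refine Subgroup.mem_inf.2 ⟨mul_mem (inv_mem (hBA hb)) haA, ?_⟩
        have : b⁻¹ * a = k := by rw [← hbk]; group
        rw [this]; exact hk
      have : b⁻¹ * a ∈ ((B ⊓ Hα : Subgroup G) : Set G) * (Hs : Set G) := by
        rw [← h2]; exact ⟨_, hkA, 1, one_mem _, mul_one _⟩
      obtain ⟨b', hb', s, hs, hbs⟩ := this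
      have hb'B : b' ∈ B := (Subgroup.mem_inf.1 hb').1
      refine ⟨b * b', mul_mem hb hb'B, s, hs, ?_⟩
      show b * b' * s = a
      have hbs' : b' * s = b⁻¹ * a := hbs
      rw [mul_assoc, hbs', ← mul_assoc, mul_inv_cancel, one_mul]
    calc (A : Set G) * (Hs : Set G) ⊆ ((B : Set G) * (Hs : Set G)) * (Hs : Set G) :=
            Set.mul_subset_mul_right hA
      _ = (B : Set G) * ((Hs : Set G) * (Hs : Set G)) := mul_assoc _ _ _
      _ = (B : Set G) * (Hs : Set G) := by rw [coe_mul_coe]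
  · exact Set.mul_subset_mul_right hBA

-- auxiliary: A * ⋂ K i = ⋂ A * K i for closed subgroups in compact group
lemma aux_mul_iInter {G : Type*} [Group G] [TopologicalSpace G] [IsTopologicalGroup G]
    [CompactSpace G] [T2Space G]
    (A : Subgroup G) (hA : IsClosed (A : Set G))
    {ι : Type*} [Nonempty ι] (K : ι → Subgroup G) (hK : ∀ i, IsClosed ((K i : Set G)))
    (hdir : Directed (· ≥ ·) K) :
    (A : Set G) * (⋂ i, (K i : Set G)) = ⋂ i, (A : Set G) * (K i : Set G) := by
  apply subset_antisymm
  · refine Set.subset_iInter fun i => ?_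
    exact Set.mul_subset_mul_left (Set.iInter_subset _ i)
  · intro x hx
    simp only [Set.mem_iInter] at hx
    set t : ι → Set G := fun i => (A : Set G) ∩ (x • ((K i : Set G))) with ht
    have hne : ∀ i, (t i).Nonempty := by
      intro i
      obtain ⟨a, ha, k, hk', hak⟩ := Set.mem_mul.1 (hx i)
      exact ⟨a, ha, k⁻¹, inv_mem hk', by simp only [smul_eq_mul]; rw [← hak]; group⟩
    have hcl : ∀ i, IsClosed (t i) := fun i =>
      hA.inter ((Homeomorph.mulLeft x).isClosedMap _ (hK i))
    have hcp : ∀ i, IsCompact (t i) := fun i => (hcl i).isCompact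
    have hd : Directed (· ⊇ ·) t := by
      intro i j
      obtain ⟨k, hki, hkj⟩ := hdir i j
      exact ⟨k, Set.inter_subset_inter_right _ (Set.smul_set_mono hki),
        Set.inter_subset_inter_right _ (Set.smul_set_mono hkj)⟩
    obtain ⟨a, ha⟩ := IsCompact.nonempty_iInter_of_directed_nonempty_isCompact_isClosed t hd hne hcp hcl
    simp only [Set.mem_iInter, Set.mem_inter_iff] at ha
    have haA : a ∈ A := (ha (Classical.arbitrary ι)).1
    refine Set.mem_mul.2 ⟨a, haA, a⁻¹ * x, ?_, by group⟩
    refine Set.mem_iInter.2 fun i => ?_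
    obtain ⟨k, hk', hk2⟩ := (ha i).2
    have : a⁻¹ * x = k⁻¹ := by
      simp only [smul_eq_mul] at hk2; rw [← hk2]; group
    rw [this]; exact inv_mem hk'

/-- Let `A, B` be closed subgroups of a profinite group `G` with `B < A`,
and `(H_α)_{α ≤ μ}` an accessible series from `G` to a closed subgroup `H`.
If `AH ≠ BH` then `(A ∩ H_α)H_{α+1} ≠ (B ∩ H_α)H_{α+1}` for some `α < μ`. -/
theorem different_in_pieces
    {G : Type*} [Group G] [TopologicalSpace G] [IsTopologicalGroup G]
    [CompactSpace G] [T2Space G] [TotallyDisconnectedSpace G]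
    (A B : Subgroup G) (hA : IsClosed (A : Set G)) (hB : IsClosed (B : Set G))
    (hBA : B < A)
    {μ : Ordinal} {H : Subgroup G} (T : TransfiniteSeries G μ ⊤ H)
    (h : (A : Set G) * (H : Set G) ≠ (B : Set G) * (H : Set G)) :
    ∃ α < μ,
      ((A ⊓ T.ser α : Subgroup G) : Set G) * (T.ser (α + 1) : Set G) ≠
        ((B ⊓ T.ser α : Subgroup G) : Set G) * (T.ser (α + 1) : Set G) := by
  by_contra hc
  push_neg at hc
  have anti : ∀ ⦃β γ : Ordinal⦄, β ≤ γ → γ ≤ μ → T.ser γ ≤ T.ser β := by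
    intro β γ hbg hgm
    rcases eq_or_lt_of_le hbg with rfl | hlt
    · exact le_rfl
    · exact (T.strictAnti' hlt hgm).le
  have key : ∀ α : Ordinal, α ≤ μ →
      (A : Set G) * (T.ser α : Set G) = (B : Set G) * (T.ser α : Set G) := by
    intro α
    induction α using Ordinal.limitRecOn with
    | zero =>
      intro _
      rw [T.ser_zero, Subgroup.coe_top, Set.mul_univ ⟨1, one_mem A⟩,
        Set.mul_univ ⟨1, one_mem B⟩]
    | add_one o ih =>
      intro ho
      have hom : o < μ := by
        rw [Ordinal.add_one_eq_succ, Order.succ_le_iff] at ho; exact ho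
      have hlt : o < o + 1 := by rw [Ordinal.add_one_eq_succ]; exact Order.lt_succ o
      exact aux_step A B (T.ser o) (T.ser (o + 1)) hBA.le
        (T.strictAnti' hlt ho).le (ih hom.le) (hc o hom)
    | limit o hlim ih =>
      intro ho
      have hne : Nonempty (Set.Iio o) := ⟨⟨0, hlim.pos⟩⟩
      have hser : T.ser o = ⨅ β : Set.Iio o, T.ser β := by
        rw [T.limit_inter o ho hlim, iInf_subtype]
      set K : Set.Iio o → Subgroup G := fun β => T.ser β with hK
      have hdir : Directed (· ≥ ·) K := by
        intro i j
        have hmax : max i.1 j.1 < o := max_lt (Set.mem_Iio.1 i.2) (Set.mem_Iio.1 j.2)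
        refine ⟨⟨max i.1 j.1, Set.mem_Iio.2 hmax⟩, ?_, ?_⟩
        · exact anti (le_max_left _ _) (hmax.le.trans ho)
        · exact anti (le_max_right _ _) (hmax.le.trans ho)
      have hcoe : (T.ser o : Set G) = ⋂ i, (K i : Set G) := by
        rw [hser, Subgroup.coe_iInf]
      rw [hcoe, aux_mul_iInter A hA K (fun i => T.isClosed' _) hdir,
        aux_mul_iInter B hB K (fun i => T.isClosed' _) hdir]
      exact Set.iInter_congr fun i => ih i.1 (Set.mem_Iio.1 i.2) ((Set.mem_Iio.1 i.2).le.trans ho)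
  exact h (by rw [← T.ser_last]; exact key μ le_rfl)
end

section
/- Let G be a profinite group and H a closed subgroup of infinite index. Let w₀(G/H) denote the cardinality of the set of open subgroups of G containing H. If 𝒜 is any family of open subgroups of G that is filtered from below (any two members contain a common member of 𝒜) with ⋂𝒜 = H, then |𝒜| = w₀(G/H). -/
/-- Auxiliary: there are only finitely many subgroups containing a subgroup of finite
quotient. -/
lemma finite_subgroups_above {G : Type*} [Group G] (W : Subgroup G) [Finite (G ⧸ W)] :
    Set.Finite {U : Subgroup G | W ≤ U} := by
  have key : ∀ U : Subgroup G, W ≤ U →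
      ((QuotientGroup.mk (s := W)) ⁻¹' ((QuotientGroup.mk (s := W)) '' (U : Set G)) : Set G) = (U : Set G) := by
    intro U hWU
    ext x
    constructor
    · rintro ⟨u, hu, he⟩
      have : u⁻¹ * x ∈ W := (QuotientGroup.eq (s := W)).mp he
      have hx : u * (u⁻¹ * x) ∈ U := U.mul_mem hu (hWU this)
      simpa [mul_assoc] using hx
    · intro hx
      exact ⟨x, hx, rfl⟩
  have hinj : Set.InjOn (fun U : Subgroup G => ((QuotientGroup.mk (s := W)) '' (U : Set G) : Set (G ⧸ W)))
      {U : Subgroup G | W ≤ U} := by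
    intro U hU V hV h
    apply SetLike.coe_injective
    rw [← key U hU, ← key V hV]
    simp only at h
    rw [h]
  have : Finite (Set (G ⧸ W)) := inferInstance
  exact Set.Finite.of_finite_image (Set.toFinite _) hinj

/-- Let `H` be a closed subgroup of infinite index in a profinite
group `G`, and let `w₀(G/H)` be the cardinality of the set of open subgroups of `G`
containing `H`. If `𝒜` is a family of open subgroups of `G`, filtered from below, with
`⋂ 𝒜 = H`, then `|𝒜| = w₀(G/H)`. -/
theorem card_filtered_family_eq_w0
    {G : Type*} [Group G] [TopologicalSpace G] [IsTopologicalGroup G]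
    [CompactSpace G] [T2Space G] [TotallyDisconnectedSpace G]
    (H : Subgroup G) (hHc : IsClosed (H : Set G)) (hHinf : H.index = 0)
    (𝒜 : Set (Subgroup G)) (hopen : ∀ U ∈ 𝒜, IsOpen (U : Set G))
    (hfil : ∀ U ∈ 𝒜, ∀ V ∈ 𝒜, ∃ W ∈ 𝒜, W ≤ U ∧ W ≤ V)
    (hinter : sInf 𝒜 = H) :
    Cardinal.mk ↥𝒜 = Cardinal.mk {U : Subgroup G // IsOpen (U : Set G) ∧ H ≤ U} := by
  have hmem_le : ∀ U ∈ 𝒜, H ≤ U := fun U hU => hinter ▸ sInf_le hU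
  -- `H` is not open (since it has infinite index)
  have hHnotopen : ¬ IsOpen (H : Set G) := by
    intro h
    have := H.quotient_finite_of_isOpen h
    exact Subgroup.index_ne_zero_of_finite hHinf
  -- `𝒜` is nonempty
  have hne : 𝒜.Nonempty := by
    by_contra h
    rw [Set.not_nonempty_iff_eq_empty] at h
    subst h
    rw [sInf_empty] at hinter
    rw [← hinter, Subgroup.index_top] at hHinf
    exact one_ne_zero hHinf
  -- `𝒜` is infinite
  have hinf : 𝒜.Infinite := by
    intro hfin
    obtain ⟨W, hW, hmin⟩ := hfin.exists_minimal hne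
    have hleast : ∀ U ∈ 𝒜, W ≤ U := by
      intro U hU
      obtain ⟨V, hV, hVW, hVU⟩ := hfil W hW U hU
      have := le_antisymm (hmin hV hVW) hVW
      rw [this]
      exact hVU
    have : sInf 𝒜 = W := le_antisymm (sInf_le hW) (le_sInf hleast)
    rw [hinter] at this
    exact hHnotopen (this ▸ hopen W hW)
  have : Infinite ↥𝒜 := hinf.to_subtype
  -- every open subgroup containing `H` contains a member of `𝒜`
  have hcov : ∀ U : Subgroup G, IsOpen (U : Set G) → H ≤ U → ∃ W ∈ 𝒜, W ≤ U := by
    intro U hUo hHU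
    have hneA : Nonempty ↥𝒜 := hne.to_subtype
    have hcomp : IsCompact ((U : Set G)ᶜ) :=
      (isClosed_compl_iff.mpr hUo).isCompact
    have hint : ((U : Set G)ᶜ ∩ ⋂ W : ↥𝒜, ((W : Subgroup G) : Set G)) = ∅ := by
      rw [Set.eq_empty_iff_forall_notMem]
      rintro x ⟨hxc, hxi⟩
      apply hxc
      apply hHU
      rw [← hinter]
      rw [Set.mem_iInter] at hxi
      exact (Subgroup.mem_sInf).mpr fun W hW => hxi ⟨W, hW⟩
    obtain ⟨W, hW⟩ := hcomp.elim_directed_family_closed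
      (fun W : ↥𝒜 => ((W : Subgroup G) : Set G))
      (fun W => Subgroup.isClosed_of_isOpen _ (hopen _ W.2)) hint
      (by
        rintro ⟨V1, hV1⟩ ⟨V2, hV2⟩
        obtain ⟨X, hX, h1, h2⟩ := hfil V1 hV1 V2 hV2
        exact ⟨⟨X, hX⟩, SetLike.coe_subset_coe.mpr h1, SetLike.coe_subset_coe.mpr h2⟩)
    refine ⟨W.1, W.2, fun x hx => ?_⟩
    by_contra hxU
    rw [Set.eq_empty_iff_forall_notMem] at hW
    exact hW x ⟨hxU, hx⟩
  apply le_antisymm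
  · -- `𝒜` injects into the open subgroups containing `H`
    exact Cardinal.mk_le_of_injective (f := fun U : ↥𝒜 =>
      (⟨U.1, hopen _ U.2, hmem_le _ U.2⟩ : {U : Subgroup G // IsOpen (U : Set G) ∧ H ≤ U}))
      (fun a b h => Subtype.ext (Subtype.mk_eq_mk.mp h))
  · -- the open subgroups containing `H` are covered by finite sets indexed by `𝒜`
    have hsub : {U : Subgroup G | IsOpen (U : Set G) ∧ H ≤ U} ⊆
        ⋃ W ∈ 𝒜, {U : Subgroup G | W ≤ U} := by
      rintro U ⟨hUo, hHU⟩
      obtain ⟨W, hW, hWU⟩ := hcov U hUo hHU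
      exact Set.mem_biUnion hW hWU
    calc Cardinal.mk {U : Subgroup G // IsOpen (U : Set G) ∧ H ≤ U}
        ≤ Cardinal.mk ↥(⋃ W ∈ 𝒜, {U : Subgroup G | W ≤ U}) :=
          Cardinal.mk_le_mk_of_subset hsub
      _ ≤ Cardinal.mk ↥𝒜 * ⨆ W : ↥𝒜, Cardinal.mk ↥{U : Subgroup G | (W : Subgroup G) ≤ U} :=
          Cardinal.mk_biUnion_le _ _
      _ ≤ Cardinal.mk ↥𝒜 * Cardinal.aleph0 := by
          apply mul_le_mul_right
          apply ciSup_le'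
          intro W
          have : Finite (G ⧸ (W : Subgroup G)) :=
            Subgroup.quotient_finite_of_isOpen _ (hopen _ W.2)
          have hf : Set.Finite {U : Subgroup G | (W : Subgroup G) ≤ U} :=
            finite_subgroups_above _
          have := hf.to_subtype
          exact Cardinal.mk_le_aleph0
      _ = Cardinal.mk ↥𝒜 := Cardinal.mk_mul_aleph0_eq
end

section
/- Let G be a profinite group and H an accessible closed subgroup of infinite index. If G = H_0 > ⋯ > H_λ > ⋯ > H_μ = H is an accessible series from G to H in which every successor quotient H_λ/H_{λ+1} is finite and nontrivial, then the cardinality of μ equals w₀(G/H), the cardinality of the set of open subgroups of G containing H. -/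
open scoped Pointwise

open Cardinal

namespace AccAux

variable {G : Type*} [Group G]

lemma mem_iff_mk_mem {U X : Subgroup G} (hUX : U ≤ X) (g : G) :
    g ∈ X ↔ (QuotientGroup.mk g : G ⧸ U) ∈ QuotientGroup.mk '' (X : Set G) := by
  constructor
  · exact fun h => ⟨g, h, rfl⟩
  · rintro ⟨y, hy, he⟩
    have h1 : y⁻¹ * g ∈ U := QuotientGroup.eq.mp he
    have h2 := mul_mem hy (hUX h1)
    simpa using h2

lemma finite_above (U : Subgroup G) (hfin : Finite (G ⧸ U)) :
    Finite {X : Subgroup G // U ≤ X} := by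
  have hinj : Function.Injective
      (fun X : {X : Subgroup G // U ≤ X} => (QuotientGroup.mk '' (X.1 : Set G) : Set (G ⧸ U))) := by
    intro X Y h
    have h2 : (QuotientGroup.mk '' (X.1 : Set G) : Set (G ⧸ U)) =
        QuotientGroup.mk '' (Y.1 : Set G) := h
    apply Subtype.ext
    apply SetLike.ext
    intro g
    rw [mem_iff_mk_mem X.2 g, mem_iff_mk_mem Y.2 g, h2]
  exact Finite.of_injective _ hinj

lemma finite_intermediate (B A : Subgroup G) (hfin : Finite (↥A ⧸ B.subgroupOf A)) :
    Finite {C : Subgroup G // B ≤ C ∧ C ≤ A} := by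
  have h1 : Finite {X : Subgroup ↥A // B.subgroupOf A ≤ X} := finite_above _ hfin
  have hinj : Function.Injective (fun C : {C : Subgroup G // B ≤ C ∧ C ≤ A} =>
      (⟨C.1.subgroupOf A, fun x hx => by
        rw [Subgroup.mem_subgroupOf] at hx ⊢
        exact C.2.1 hx⟩ : {X : Subgroup ↥A // B.subgroupOf A ≤ X})) := by
    intro C D h
    have h1 : C.1.subgroupOf A = D.1.subgroupOf A := congrArg Subtype.val h
    have h2 : C.1 ⊓ A = D.1 ⊓ A := by
      rw [← Subgroup.subgroupOf_map_subtype, h1, Subgroup.subgroupOf_map_subtype]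
    apply Subtype.ext
    rwa [inf_eq_left.mpr C.2.2, inf_eq_left.mpr D.2.2] at h2
  exact Finite.of_injective _ hinj

lemma le_normalizer_of_subgroupOf_normal {B A : Subgroup G} (hBA : B ≤ A)
    (hn : (B.subgroupOf A).Normal) : A ≤ Subgroup.normalizer (B : Set _) := by
  have key : ∀ a ∈ A, ∀ b ∈ B, a * b * a⁻¹ ∈ B := by
    intro a ha b hb
    have h1 := hn.conj_mem ⟨b, hBA hb⟩ (by rwa [Subgroup.mem_subgroupOf]) ⟨a, ha⟩
    rwa [Subgroup.mem_subgroupOf] at h1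
  intro a ha
  rw [Subgroup.mem_normalizer_iff]
  intro b
  constructor
  · exact fun hb => key a ha b hb
  · intro hb
    have h2 := key a⁻¹ (inv_mem ha) _ hb
    have h3 : a⁻¹ * (a * b * a⁻¹) * a⁻¹⁻¹ = b := by group
    rwa [h3] at h2

lemma map_conj_of_le_normalizer {A S : Subgroup G} (h : A ≤ Subgroup.normalizer (S : Set _)) {a : G} (ha : a ∈ A) :
    Subgroup.map (MulAut.conj a).toMonoidHom S = S := by
  ext x
  simp only [Subgroup.mem_map]
  constructor
  · rintro ⟨y, hy, rfl⟩
    have := (Subgroup.mem_normalizer_iff.mp (h ha) y).mp hy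
    simpa [MulAut.conj] using this
  · intro hx
    refine ⟨a⁻¹ * x * a, ?_, ?_⟩
    · have := (Subgroup.mem_normalizer_iff.mp (h (inv_mem ha)) x).mp hx
      simpa using this
    · simp [MulAut.conj]
      group

lemma le_normalizer_of_maps {A S : Subgroup G}
    (h : ∀ a ∈ A, Subgroup.map (MulAut.conj a).toMonoidHom S = S) : A ≤ Subgroup.normalizer (S : Set _) := by
  intro a ha
  rw [Subgroup.mem_normalizer_iff]
  intro b
  constructor
  · intro hb
    have h1 : (MulAut.conj a).toMonoidHom b ∈ Subgroup.map (MulAut.conj a).toMonoidHom S :=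
      Subgroup.mem_map_of_mem _ hb
    rw [h a ha] at h1
    simpa [MulAut.conj] using h1
  · intro hb
    rw [← h a ha] at hb
    obtain ⟨y, hy, he⟩ := hb
    have h2 : y = b := by
      have : a * y * a⁻¹ = a * b * a⁻¹ := by simpa [MulAut.conj] using he
      exact mul_left_cancel (mul_right_cancel this)
    rwa [← h2]

lemma le_normalizer_sup {A S T : Subgroup G} (hS : A ≤ Subgroup.normalizer (S : Set _)) (hT : A ≤ Subgroup.normalizer (T : Set _)) :
    A ≤ Subgroup.normalizer ((S ⊔ T : Subgroup G) : Set G) := by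
  apply le_normalizer_of_maps
  intro a ha
  rw [Subgroup.map_sup, map_conj_of_le_normalizer hS ha, map_conj_of_le_normalizer hT ha]

lemma le_normalizer_of_normal' {A S : Subgroup G} (hS : S.Normal) : A ≤ Subgroup.normalizer (S : Set _) := by
  have h := Subgroup.normalizer_eq_top_iff.mpr hS
  rw [h]
  exact le_top

lemma exists_mul_of_mem_sup {A V : Subgroup G} (hAn : A ≤ Subgroup.normalizer (V : Set _)) {w : G}
    (hw : w ∈ A ⊔ V) : ∃ a ∈ A, a⁻¹ * w ∈ V := by
  let P : Subgroup G :=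
  { carrier := {w | ∃ a ∈ A, a⁻¹ * w ∈ V}
    one_mem' := ⟨1, one_mem _, by simpa using one_mem V⟩
    mul_mem' := by
      rintro x y ⟨a, ha, hva⟩ ⟨b, hb, hvb⟩
      refine ⟨a * b, mul_mem ha hb, ?_⟩
      have h1 : b⁻¹ * (a⁻¹ * x) * b ∈ V := by
        have h2 := Subgroup.mem_normalizer_iff.mp (hAn (inv_mem hb)) (a⁻¹ * x)
        simpa using h2.mp hva
      have h3 : (a * b)⁻¹ * (x * y) = (b⁻¹ * (a⁻¹ * x) * b) * (b⁻¹ * y) := by group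
      rw [h3]
      exact mul_mem h1 hvb
    inv_mem' := by
      rintro x ⟨a, ha, hva⟩
      refine ⟨a⁻¹, inv_mem ha, ?_⟩
      have h2 := Subgroup.mem_normalizer_iff.mp (hAn ha) ((a⁻¹ * x)⁻¹)
      have h3 : a * (a⁻¹ * x)⁻¹ * a⁻¹ ∈ V := h2.mp (inv_mem hva)
      have h4 : a⁻¹⁻¹ * x⁻¹ = a * (a⁻¹ * x)⁻¹ * a⁻¹ := by group
      rw [h4]
      exact h3 }
  have hle : A ⊔ V ≤ P := sup_le (fun a ha => ⟨a, ha, by simpa using one_mem V⟩)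
    (fun v hv => ⟨1, one_mem _, by simpa using hv⟩)
  exact hle hw

lemma normal_infOf (A V : Subgroup G) (hAn : A ≤ Subgroup.normalizer (V : Set _)) :
    ((A ⊓ V).subgroupOf A).Normal := by
  constructor
  rintro n hn g
  rw [Subgroup.mem_subgroupOf] at hn ⊢
  rw [Subgroup.mem_inf] at hn ⊢
  have hgA : (g : G) ∈ A := g.2
  have hc : ((g * n * g⁻¹ : ↥A) : G) = (g : G) * (n : G) * (g : G)⁻¹ := rfl
  rw [hc]
  exact ⟨mul_mem (mul_mem hgA hn.1) (inv_mem hgA),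
    (Subgroup.mem_normalizer_iff.mp (hAn hgA) (n : G)).mp hn.2⟩


open scoped Classical in
noncomputable def psi (A V C : Subgroup G) (w : G) : ↥A ⧸ C.subgroupOf A :=
  if h : ∃ a ∈ A, a⁻¹ * w ∈ V then QuotientGroup.mk ⟨h.choose, h.choose_spec.1⟩
  else QuotientGroup.mk ⟨1, one_mem A⟩

lemma psi_spec (A V C : Subgroup G) (hC : A ⊓ V = C) {w a : G} (ha : a ∈ A)
    (hv : a⁻¹ * w ∈ V) : psi A V C w = QuotientGroup.mk ⟨a, ha⟩ := by
  have h : ∃ a ∈ A, a⁻¹ * w ∈ V := ⟨a, ha, hv⟩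
  have h1 := h.choose_spec.1
  have h2 := h.choose_spec.2
  classical
  simp only [psi, dif_pos h]
  refine QuotientGroup.eq.mpr ?_
  rw [Subgroup.mem_subgroupOf]
  have hc : (((⟨h.choose, h1⟩ : ↥A)⁻¹ * ⟨a, ha⟩ : ↥A) : G) = h.choose⁻¹ * a := rfl
  rw [hc, ← hC, Subgroup.mem_inf]
  refine ⟨mul_mem (inv_mem h1) ha, ?_⟩
  have h3 : h.choose⁻¹ * a = (h.choose⁻¹ * w) * (a⁻¹ * w)⁻¹ := by group
  rw [h3]
  exact mul_mem h2 (inv_mem hv)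

lemma psi_one (A V C : Subgroup G) (hC : A ⊓ V = C) :
    psi A V C 1 = QuotientGroup.mk ⟨1, one_mem A⟩ :=
  psi_spec A V C hC (one_mem A) (by simpa using one_mem V)

lemma psi_of_mem_left (A V C : Subgroup G) (hC : A ⊓ V = C) {a : G} (ha : a ∈ A) :
    psi A V C a = QuotientGroup.mk ⟨a, ha⟩ :=
  psi_spec A V C hC ha (by simpa using one_mem V)

lemma psi_mul (A V C : Subgroup G) [hnc : (C.subgroupOf A).Normal]
    (hAn : A ≤ Subgroup.normalizer (V : Set _)) (hC : A ⊓ V = C) {w₁ w₂ : G}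
    (h₁ : w₁ ∈ A ⊔ V) (h₂ : w₂ ∈ A ⊔ V) :
    psi A V C (w₁ * w₂) = psi A V C w₁ * psi A V C w₂ := by
  obtain ⟨a₁, ha₁, hv₁⟩ := exists_mul_of_mem_sup hAn h₁
  obtain ⟨a₂, ha₂, hv₂⟩ := exists_mul_of_mem_sup hAn h₂
  have hv : (a₁ * a₂)⁻¹ * (w₁ * w₂) ∈ V := by
    have hkey : (a₁ * a₂)⁻¹ * (w₁ * w₂) = (a₂⁻¹ * (a₁⁻¹ * w₁) * a₂) * (a₂⁻¹ * w₂) := by group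
    rw [hkey]
    refine mul_mem ?_ hv₂
    have h3 := Subgroup.mem_normalizer_iff.mp (hAn (inv_mem ha₂)) (a₁⁻¹ * w₁)
    simpa using h3.mp hv₁
  rw [psi_spec A V C hC ha₁ hv₁, psi_spec A V C hC ha₂ hv₂,
    psi_spec A V C hC (mul_mem ha₁ ha₂) hv]
  rfl

lemma psi_inv (A V C : Subgroup G) [hnc : (C.subgroupOf A).Normal]
    (hAn : A ≤ Subgroup.normalizer (V : Set _)) (hC : A ⊓ V = C) {w : G} (hw : w ∈ A ⊔ V) :
    psi A V C w⁻¹ = (psi A V C w)⁻¹ := by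
  have h1 : psi A V C w⁻¹ * psi A V C w = 1 := by
    rw [← psi_mul A V C hAn hC (inv_mem hw) hw, inv_mul_cancel]
    have := psi_one A V C hC
    exact this.trans rfl
  exact eq_inv_of_mul_eq_one_left h1

lemma psi_eq_one_iff (A V C : Subgroup G) (hC : A ⊓ V = C)
    (hAn : A ≤ Subgroup.normalizer (V : Set _)) {w : G} (hw : w ∈ A ⊔ V) :
    w ∈ V ↔ psi A V C w = QuotientGroup.mk ⟨1, one_mem A⟩ := by
  constructor
  · intro h
    exact psi_spec A V C hC (one_mem A) (by simpa using h)
  · intro h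
    obtain ⟨a, ha, hv⟩ := exists_mul_of_mem_sup hAn hw
    rw [psi_spec A V C hC ha hv] at h
    have h1 := QuotientGroup.eq.mp h
    rw [Subgroup.mem_subgroupOf] at h1
    have hc : (((⟨a, ha⟩ : ↥A)⁻¹ * ⟨1, one_mem A⟩ : ↥A) : G) = a⁻¹ := by
      simp
    rw [hc] at h1
    have h2 : a ∈ C := by simpa using inv_mem h1
    rw [← hC, Subgroup.mem_inf] at h2
    have h3 : w = a * (a⁻¹ * w) := by group
    rw [h3]
    exact mul_mem h2.2 hv

universe u
lemma mk_le_mk_mul_of_fibers {α β : Type u} (f : α → β) {c : Cardinal.{u}}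
    (h : ∀ b : β, #{a : α // f a = b} ≤ c) : #α ≤ #β * c := by
  calc #α = #(Σ b : β, {a : α // f a = b}) := (Cardinal.mk_congr (Equiv.sigmaFiberEquiv f)).symm
  _ = Cardinal.sum (fun b : β => #{a : α // f a = b}) := Cardinal.mk_sigma _
  _ ≤ Cardinal.sum (fun _ : β => c) := Cardinal.sum_le_sum _ _ h
  _ = #β * c := Cardinal.sum_const' β c

variable {G : Type u} [Group G] [TopologicalSpace G] [ContinuousMul G] [CompactSpace G]

lemma card_fiber (A W C : Subgroup G) (hQ : Finite (↥A ⧸ C.subgroupOf A))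
    (hnc : (C.subgroupOf A).Normal) :
    #{V : Subgroup G // IsOpen (V : Set G) ∧ A ≤ Subgroup.normalizer (V : Set _) ∧ A ⊔ V = W ∧ A ⊓ V = C} ≤
      #{E : Subgroup G // IsOpen (E : Set G) ∧ A ≤ E} * Cardinal.aleph0 := by
  classical
  rcases isEmpty_or_nonempty
    {V : Subgroup G // IsOpen (V : Set G) ∧ A ≤ Subgroup.normalizer (V : Set _) ∧ A ⊔ V = W ∧ A ⊓ V = C} with he | hne
  · rw [Cardinal.mk_eq_zero]
    exact zero_le
  obtain ⟨V₀⟩ := hne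
  set 𝒩 := {V : Subgroup G // IsOpen (V : Set G) ∧ A ≤ Subgroup.normalizer (V : Set _) ∧ A ⊔ V = W ∧ A ⊓ V = C}
    with h𝒩
  haveI := hnc
  have hWV : ∀ V : 𝒩, ∀ w : G, w ∈ W ↔ w ∈ A ⊔ V.1 := fun V w => by rw [V.2.2.2.1]
  -- the equalizer subgroup
  have hone : ∀ V : 𝒩, psi A V.1 C 1 = psi A V₀.1 C 1 := by
    intro V
    rw [psi_one A V.1 C V.2.2.2.2, psi_one A V₀.1 C V₀.2.2.2.2]
  let Efun : 𝒩 → Subgroup G := fun V =>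
  { carrier := {w : G | w ∈ W ∧ psi A V.1 C w = psi A V₀.1 C w}
    one_mem' := ⟨one_mem W, hone V⟩
    mul_mem' := by
      rintro x y ⟨hxW, hx⟩ ⟨hyW, hy⟩
      refine ⟨mul_mem hxW hyW, ?_⟩
      rw [psi_mul A V.1 C V.2.2.1 V.2.2.2.2 ((hWV V x).mp hxW) ((hWV V y).mp hyW),
        psi_mul A V₀.1 C V₀.2.2.1 V₀.2.2.2.2 ((hWV V₀ x).mp hxW) ((hWV V₀ y).mp hyW), hx, hy]
    inv_mem' := by
      rintro x ⟨hxW, hx⟩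
      refine ⟨inv_mem hxW, ?_⟩
      rw [psi_inv A V.1 C V.2.2.1 V.2.2.2.2 ((hWV V x).mp hxW),
        psi_inv A V₀.1 C V₀.2.2.1 V₀.2.2.2.2 ((hWV V₀ x).mp hxW), hx] }
  have hmemE : ∀ (V : 𝒩) (x : G),
      x ∈ Efun V ↔ x ∈ W ∧ psi A V.1 C x = psi A V₀.1 C x := fun V x => Iff.rfl
  have hEopen : ∀ V : 𝒩, IsOpen ((Efun V : Subgroup G) : Set G) := by
    intro V
    have hle : V.1 ⊓ V₀.1 ≤ Efun V := by
      intro w hw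
      rw [Subgroup.mem_inf] at hw
      refine (hmemE V w).mpr ⟨(hWV V w).mpr (le_sup_right (α := Subgroup G) hw.1), ?_⟩
      rw [psi_spec A V.1 C V.2.2.2.2 (one_mem A) (by simpa using hw.1),
        psi_spec A V₀.1 C V₀.2.2.2.2 (one_mem A) (by simpa using hw.2)]
    have hio : IsOpen ((V.1 ⊓ V₀.1 : Subgroup G) : Set G) := by
      rw [Subgroup.coe_inf]
      exact V.2.1.inter V₀.2.1
    exact Subgroup.isOpen_mono hle hio
  have hAE : ∀ V : 𝒩, A ≤ Efun V := by
    intro V a ha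
    refine (hmemE V a).mpr ⟨(hWV V a).mpr (le_sup_left (α := Subgroup G) ha), ?_⟩
    rw [psi_of_mem_left A V.1 C V.2.2.2.2 ha, psi_of_mem_left A V₀.1 C V₀.2.2.2.2 ha]
  -- encoding
  let 𝒯 := Σ E : {E : Subgroup G // IsOpen (E : Set G) ∧ A ≤ E},
    (G ⧸ (E.1 : Subgroup G) → ↥A ⧸ C.subgroupOf A)
  let Φ : 𝒩 → 𝒯 := fun V =>
    ⟨⟨Efun V, hEopen V, hAE V⟩, fun x => psi A V.1 C x.out⟩
  let Dec : 𝒯 → Set G := fun p =>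
    {w : G | w ∈ W ∧ p.2 (QuotientGroup.mk w) *
      psi A V₀.1 C ((Quotient.out (QuotientGroup.mk (s := p.1.1) w))⁻¹ * w) =
        QuotientGroup.mk ⟨1, one_mem A⟩}
  have hkey : ∀ (V : 𝒩), ∀ w ∈ W,
      psi A V.1 C w = psi A V.1 C (Quotient.out (QuotientGroup.mk (s := Efun V) w)) *
        psi A V₀.1 C ((Quotient.out (QuotientGroup.mk (s := Efun V) w))⁻¹ * w) := by
    intro V w hw
    set r := Quotient.out (QuotientGroup.mk (s := Efun V) w) with hr
    have hre : r⁻¹ * w ∈ Efun V := by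
      rw [← QuotientGroup.eq]
      exact Quotient.out_eq _
    have hre' := (hmemE V _).mp hre
    have hrW : r ∈ W := by
      have h4 : r = w * (r⁻¹ * w)⁻¹ := by group
      rw [h4]
      exact mul_mem hw (inv_mem hre'.1)
    have h5 : w = r * (r⁻¹ * w) := by group
    calc psi A V.1 C w = psi A V.1 C (r * (r⁻¹ * w)) := by rw [← h5]
    _ = psi A V.1 C r * psi A V.1 C (r⁻¹ * w) :=
        psi_mul A V.1 C V.2.2.1 V.2.2.2.2 ((hWV V r).mp hrW) ((hWV V _).mp hre'.1)
    _ = psi A V.1 C r * psi A V₀.1 C (r⁻¹ * w) := by rw [hre'.2]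
  have hdec : ∀ V : 𝒩, (V.1 : Set G) = Dec (Φ V) := by
    intro V
    ext w
    simp only [Dec, Φ, Set.mem_setOf_eq, SetLike.mem_coe]
    constructor
    · intro hwV
      have hw : w ∈ W := (hWV V w).mpr (le_sup_right (α := Subgroup G) hwV)
      refine ⟨hw, ?_⟩
      rw [← hkey V w hw]
      exact ((psi_eq_one_iff A V.1 C V.2.2.2.2 V.2.2.1 ((hWV V w).mp hw)).mp hwV)
    · rintro ⟨hw, hx⟩
      refine (psi_eq_one_iff A V.1 C V.2.2.2.2 V.2.2.1 ((hWV V w).mp hw)).mpr ?_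
      rw [hkey V w hw]
      exact hx
  have hΦinj : Function.Injective Φ := by
    intro V₁ V₂ h
    apply Subtype.ext
    apply SetLike.coe_injective
    rw [hdec V₁, hdec V₂, h]
  calc #𝒩 ≤ #𝒯 := Cardinal.mk_le_of_injective hΦinj
  _ = Cardinal.sum (fun E : {E : Subgroup G // IsOpen (E : Set G) ∧ A ≤ E} =>
      #(G ⧸ (E.1 : Subgroup G) → ↥A ⧸ C.subgroupOf A)) := Cardinal.mk_sigma _
  _ ≤ Cardinal.sum (fun _ : {E : Subgroup G // IsOpen (E : Set G) ∧ A ≤ E} =>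
      Cardinal.aleph0) := by
      refine Cardinal.sum_le_sum _ _ ?_
      intro E
      haveI : Finite (G ⧸ (E.1 : Subgroup G)) := Subgroup.quotient_finite_of_isOpen _ E.2.1
      haveI : Finite (G ⧸ (E.1 : Subgroup G) → ↥A ⧸ C.subgroupOf A) := by infer_instance
      exact Cardinal.mk_le_aleph0
  _ = _ := Cardinal.sum_const' _ _

section Step
variable {G2 : Type u} [Group G2]
lemma finite_quot_of_le {B C A : Subgroup G2} (hBC : B ≤ C)
    (h : Finite (↥A ⧸ B.subgroupOf A)) : Finite (↥A ⧸ C.subgroupOf A) := by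
  have hle : B.subgroupOf A ≤ C.subgroupOf A := by
    intro x hx
    rw [Subgroup.mem_subgroupOf] at hx ⊢
    exact hBC hx
  have hdvd : (C.subgroupOf A).index ∣ (B.subgroupOf A).index :=
    Subgroup.index_dvd_of_le hle
  have hB : (B.subgroupOf A).index ≠ 0 := @Subgroup.index_ne_zero_of_finite _ _ _ h
  have hC : (C.subgroupOf A).index ≠ 0 := by
    intro h0
    rw [h0] at hdvd
    exact hB (zero_dvd_iff.mp hdvd)
  exact Nat.finite_of_card_ne_zero hC

variable [TopologicalSpace G2] [IsTopologicalGroup G2] [CompactSpace G2]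

lemma card_le_step (A B : Subgroup G2) (hBA : B ≤ A) (hn : (B.subgroupOf A).Normal)
    (hQfin : Finite (↥A ⧸ B.subgroupOf A)) :
    #{U : Subgroup G2 // IsOpen (U : Set G2) ∧ B ≤ U} ≤
      #{U : Subgroup G2 // IsOpen (U : Set G2) ∧ A ≤ U} ⊔ Cardinal.aleph0 := by
  classical
  set κ := #{U : Subgroup G2 // IsOpen (U : Set G2) ∧ A ≤ U} ⊔ Cardinal.aleph0 with hκ
  have hκ0 : Cardinal.aleph0 ≤ κ := le_sup_right
  have hκA : #{U : Subgroup G2 // IsOpen (U : Set G2) ∧ A ≤ U} ≤ κ := le_sup_left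
  have hκκ : κ * κ = κ := Cardinal.mul_eq_self hκ0
  have hAnorm : A ≤ Subgroup.normalizer (B : Set _) := le_normalizer_of_subgroupOf_normal hBA hn
  have hcore : ∀ U : {U : Subgroup G2 // IsOpen (U : Set G2) ∧ B ≤ U},
      IsOpen ((B ⊔ U.1.normalCore : Subgroup G2) : Set G2) ∧ B ≤ B ⊔ U.1.normalCore ∧
        A ≤ Subgroup.normalizer ((B ⊔ U.1.normalCore : Subgroup G2) : Set G2) ∧ B ⊔ U.1.normalCore ≤ U.1 := by
    intro U
    haveI h1 : Finite (G2 ⧸ U.1) := Subgroup.quotient_finite_of_isOpen _ U.2.1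
    haveI h2 : U.1.FiniteIndex := Subgroup.finiteIndex_of_finite_quotient (H := U.1)
    haveI h3 : U.1.normalCore.FiniteIndex := Subgroup.finiteIndex_normalCore U.1
    have hclosed : IsClosed (U.1.normalCore : Set G2) :=
      Subgroup.normalCore_isClosed _ (Subgroup.isClosed_of_isOpen _ U.2.1)
    have hNCopen : IsOpen (U.1.normalCore : Set G2) :=
      Subgroup.isOpen_of_isClosed_of_finiteIndex _ hclosed
    refine ⟨Subgroup.isOpen_mono le_sup_right hNCopen, le_sup_left, ?_,
      sup_le U.2.2 (Subgroup.normalCore_le U.1)⟩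
    exact le_normalizer_sup hAnorm (le_normalizer_of_normal' (Subgroup.normalCore_normal U.1))
  have stepA : #{U : Subgroup G2 // IsOpen (U : Set G2) ∧ B ≤ U} ≤
      #{V : Subgroup G2 // IsOpen (V : Set G2) ∧ B ≤ V ∧ A ≤ Subgroup.normalizer (V : Set _)} *
        Cardinal.aleph0 := by
    have hmain := mk_le_mk_mul_of_fibers
      (f := fun U : {U : Subgroup G2 // IsOpen (U : Set G2) ∧ B ≤ U} =>
        (⟨B ⊔ U.1.normalCore, (hcore U).1, (hcore U).2.1, (hcore U).2.2.1⟩ :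
          {V : Subgroup G2 // IsOpen (V : Set G2) ∧ B ≤ V ∧ A ≤ Subgroup.normalizer (V : Set _)}))
      (c := Cardinal.aleph0) ?_
    · exact hmain
    intro b
    haveI : Finite (G2 ⧸ b.1) := Subgroup.quotient_finite_of_isOpen _ b.2.1
    haveI hfab := finite_above b.1 this
    have hinj : Function.Injective
        (fun p : {U : {U : Subgroup G2 // IsOpen (U : Set G2) ∧ B ≤ U} //
            (⟨B ⊔ U.1.normalCore, (hcore U).1, (hcore U).2.1, (hcore U).2.2.1⟩ :
              {V : Subgroup G2 // IsOpen (V : Set G2) ∧ B ≤ V ∧ A ≤ Subgroup.normalizer (V : Set _)}) = b} =>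
          (⟨p.1.1, by
            have h1 : B ⊔ p.1.1.normalCore = b.1 := congrArg Subtype.val p.2
            rw [← h1]
            exact (hcore p.1).2.2.2⟩ : {X : Subgroup G2 // b.1 ≤ X})) := by
      intro p q h
      simp only [Subtype.mk.injEq] at h
      have h2 : p.1.1 = q.1.1 := h
      apply Subtype.ext
      apply Subtype.ext
      exact h2
    haveI := Finite.of_injective _ hinj
    exact Cardinal.mk_le_aleph0
  haveI h𝒞fin : Finite {C : Subgroup G2 // B ≤ C ∧ C ≤ A} := finite_intermediate B A hQfin
  have stepB : #{V : Subgroup G2 // IsOpen (V : Set G2) ∧ B ≤ V ∧ A ≤ Subgroup.normalizer (V : Set _)} ≤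
      #({U : Subgroup G2 // IsOpen (U : Set G2) ∧ A ≤ U} ×
          {C : Subgroup G2 // B ≤ C ∧ C ≤ A}) *
        (#{U : Subgroup G2 // IsOpen (U : Set G2) ∧ A ≤ U} * Cardinal.aleph0) := by
    have hmain := mk_le_mk_mul_of_fibers
      (f := fun V : {V : Subgroup G2 // IsOpen (V : Set G2) ∧ B ≤ V ∧ A ≤ Subgroup.normalizer (V : Set _)} =>
        ((⟨A ⊔ V.1, Subgroup.isOpen_mono le_sup_right V.2.1, le_sup_left⟩,
          ⟨A ⊓ V.1, le_inf hBA V.2.2.1, inf_le_left⟩) :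
          {U : Subgroup G2 // IsOpen (U : Set G2) ∧ A ≤ U} ×
            {C : Subgroup G2 // B ≤ C ∧ C ≤ A}))
      (c := #{U : Subgroup G2 // IsOpen (U : Set G2) ∧ A ≤ U} * Cardinal.aleph0) ?_
    · exact hmain
    intro b
    rcases isEmpty_or_nonempty {V : {V : Subgroup G2 // IsOpen (V : Set G2) ∧ B ≤ V ∧
        A ≤ Subgroup.normalizer (V : Set _)} //
        ((⟨A ⊔ V.1, Subgroup.isOpen_mono le_sup_right V.2.1, le_sup_left⟩,
          ⟨A ⊓ V.1, le_inf hBA V.2.2.1, inf_le_left⟩) :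
          {U : Subgroup G2 // IsOpen (U : Set G2) ∧ A ≤ U} ×
            {C : Subgroup G2 // B ≤ C ∧ C ≤ A}) = b} with he | hne
    · rw [Cardinal.mk_eq_zero]
      exact zero_le
    obtain ⟨p0⟩ := hne
    have hW0 : A ⊔ p0.1.1 = b.1.1 := congrArg (fun x => (Prod.fst x).1) p0.2
    have hC0 : A ⊓ p0.1.1 = b.2.1 := congrArg (fun x => (Prod.snd x).1) p0.2
    have hnc : ((b.2.1).subgroupOf A).Normal := by
      rw [← hC0]
      exact normal_infOf A p0.1.1 p0.1.2.2.2
    have hQ : Finite (↥A ⧸ (b.2.1).subgroupOf A) := finite_quot_of_le b.2.2.1 hQfin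
    have hinj : Function.Injective
        (fun p : {V : {V : Subgroup G2 // IsOpen (V : Set G2) ∧ B ≤ V ∧
            A ≤ Subgroup.normalizer (V : Set _)} //
            ((⟨A ⊔ V.1, Subgroup.isOpen_mono le_sup_right V.2.1, le_sup_left⟩,
              ⟨A ⊓ V.1, le_inf hBA V.2.2.1, inf_le_left⟩) :
              {U : Subgroup G2 // IsOpen (U : Set G2) ∧ A ≤ U} ×
                {C : Subgroup G2 // B ≤ C ∧ C ≤ A}) = b} =>
          (⟨p.1.1, p.1.2.1, p.1.2.2.2,
            congrArg (fun x => (Prod.fst x).1) p.2,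
            congrArg (fun x => (Prod.snd x).1) p.2⟩ :
            {V : Subgroup G2 // IsOpen (V : Set G2) ∧ A ≤ Subgroup.normalizer (V : Set _) ∧
              A ⊔ V = b.1.1 ∧ A ⊓ V = b.2.1})) := by
      intro p q h
      simp only [Subtype.mk.injEq] at h
      have h2 : p.1.1 = q.1.1 := h
      apply Subtype.ext
      apply Subtype.ext
      exact h2
    calc #{V : {V : Subgroup G2 // IsOpen (V : Set G2) ∧ B ≤ V ∧ A ≤ Subgroup.normalizer (V : Set _)} //
        ((⟨A ⊔ V.1, Subgroup.isOpen_mono le_sup_right V.2.1, le_sup_left⟩,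
          ⟨A ⊓ V.1, le_inf hBA V.2.2.1, inf_le_left⟩) :
          {U : Subgroup G2 // IsOpen (U : Set G2) ∧ A ≤ U} ×
            {C : Subgroup G2 // B ≤ C ∧ C ≤ A}) = b}
        ≤ #{V : Subgroup G2 // IsOpen (V : Set G2) ∧ A ≤ Subgroup.normalizer (V : Set _) ∧
              A ⊔ V = b.1.1 ∧ A ⊓ V = b.2.1} := Cardinal.mk_le_of_injective hinj
    _ ≤ #{U : Subgroup G2 // IsOpen (U : Set G2) ∧ A ≤ U} * Cardinal.aleph0 :=
        card_fiber A b.1.1 b.2.1 hQ hnc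
  have h𝒞le : #{C : Subgroup G2 // B ≤ C ∧ C ≤ A} ≤ κ :=
    le_trans Cardinal.mk_le_aleph0 hκ0
  have hprod : #({U : Subgroup G2 // IsOpen (U : Set G2) ∧ A ≤ U} ×
      {C : Subgroup G2 // B ≤ C ∧ C ≤ A}) ≤ κ := by
    rw [Cardinal.mk_prod, Cardinal.lift_id, Cardinal.lift_id]
    calc _ ≤ κ * κ := mul_le_mul' hκA h𝒞le
    _ = κ := hκκ
  calc #{U : Subgroup G2 // IsOpen (U : Set G2) ∧ B ≤ U}
      ≤ #{V : Subgroup G2 // IsOpen (V : Set G2) ∧ B ≤ V ∧ A ≤ Subgroup.normalizer (V : Set _)} *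
        Cardinal.aleph0 := stepA
  _ ≤ (#({U : Subgroup G2 // IsOpen (U : Set G2) ∧ A ≤ U} ×
        {C : Subgroup G2 // B ≤ C ∧ C ≤ A}) *
        (#{U : Subgroup G2 // IsOpen (U : Set G2) ∧ A ≤ U} * Cardinal.aleph0)) *
        Cardinal.aleph0 := mul_le_mul' stepB le_rfl
  _ ≤ (κ * (κ * κ)) * κ := mul_le_mul' (mul_le_mul' hprod (mul_le_mul' hκA hκ0)) hκ0
  _ = κ := by rw [hκκ, hκκ, hκκ]

end Step
section Exist
variable {G3 : Type u} [Group G3] [TopologicalSpace G3] [IsTopologicalGroup G3]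
  [CompactSpace G3] [T2Space G3] [TotallyDisconnectedSpace G3]

lemma exists_open_inter_eq {A B : Subgroup G3} (hBA : B ≤ A) (_hAc : IsClosed (A : Set G3))
    (hBc : IsClosed (B : Set G3)) (hrel : B.relIndex A ≠ 0) :
    ∃ U : Subgroup G3, IsOpen (U : Set G3) ∧ U ⊓ A = B := by
  haveI : CompactSpace ↥A := isCompact_iff_compactSpace.mp _hAc.isCompact
  have hB'c : IsClosed ((B.subgroupOf A : Subgroup ↥A) : Set ↥A) := by
    rw [Subgroup.coe_subgroupOf]
    exact hBc.preimage continuous_subtype_val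
  haveI : (B.subgroupOf A).FiniteIndex := ⟨hrel⟩
  have hB'o : IsOpen ((B.subgroupOf A : Subgroup ↥A) : Set ↥A) :=
    Subgroup.isOpen_of_isClosed_of_finiteIndex _ hB'c
  obtain ⟨O, hO, hOeq⟩ := isOpen_induced_iff.mp hB'o
  have hmem : ∀ g (hg : g ∈ A), g ∈ O ↔ g ∈ B := by
    intro g hg
    have h1 := Set.ext_iff.mp hOeq ⟨g, hg⟩
    simpa [Subgroup.mem_subgroupOf] using h1
  have h1O : (1 : G3) ∈ O := (hmem 1 (one_mem A)).mpr (one_mem B)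
  obtain ⟨VC, ⟨h1V, hVclopen⟩, hVO⟩ := (nhds_basis_clopen (1 : G3)).mem_iff.mp
    (hO.mem_nhds h1O)
  obtain ⟨N, hN⟩ := IsTopologicalGroup.exist_openNormalSubgroup_sub_clopen_nhds_of_one hVclopen h1V
  refine ⟨B ⊔ N.toSubgroup, ?_, ?_⟩
  · rw [Subgroup.mul_normal B N.toSubgroup]
    exact IsOpen.mul_left N.toOpenSubgroup.isOpen
  · refine le_antisymm ?_ (le_inf le_sup_left hBA)
    intro x hx
    rw [Subgroup.mem_inf] at hx
    have hx1 : x ∈ ((B ⊔ N.toSubgroup : Subgroup G3) : Set G3) := hx.1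
    rw [Subgroup.mul_normal B N.toSubgroup] at hx1
    obtain ⟨b, hb, n, hn, hbn⟩ := hx1
    have hnA : n ∈ A := by
      have : n = b⁻¹ * x := by rw [← hbn]; group
      rw [this]
      exact mul_mem (inv_mem (hBA hb)) hx.2
    have hnB : n ∈ B := (hmem n hnA).mp (hVO (hN hn))
    rw [← hbn]
    exact mul_mem hb hnB

end Exist

end AccAux

open Cardinal

/-- If `H` is an accessible closed subgroup of infinite index in a
profinite group `G` and `(H_λ)_{λ ≤ μ}` is an accessible series from `G` to `H` all of
whose successor quotients are finite (and nontrivial), then `|μ| = w₀(G/H)`, the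
cardinality of the set of open subgroups of `G` containing `H`. -/
theorem length_of_accessible_series
    {G : Type} [Group G] [TopologicalSpace G] [IsTopologicalGroup G]
    [CompactSpace G] [T2Space G] [TotallyDisconnectedSpace G]
    (H : Subgroup G) (hHinf : H.index = 0)
    {μ : Ordinal.{0}} (T : TransfiniteSeries G μ ⊤ H)
    (hfin : ∀ α < μ, (T.ser (α + 1)).relIndex (T.ser α) ≠ 0) :
    μ.card = Cardinal.mk {U : Subgroup G // IsOpen (U : Set G) ∧ H ≤ U} := by
  classical
  have hser_mono : ∀ {x y : Ordinal}, x ≤ y → y ≤ μ → T.ser y ≤ T.ser x := by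
    intro x y hxy hy
    rcases eq_or_lt_of_le hxy with h | h
    · rw [h]
    · exact (T.strictAnti' h hy).le
  have hsucc_le : ∀ {β : Ordinal}, β < μ → β + 1 ≤ μ := by
    intro β hβ
    rw [Ordinal.add_one_eq_succ]
    exact Order.succ_le_of_lt hβ
  have hlt_succ : ∀ β : Ordinal, β < β + 1 := by
    intro β
    rw [Ordinal.add_one_eq_succ]
    exact Order.lt_succ β
  -- ## lower bound : μ.card ≤ #opens
  have hlower : μ.card ≤ #{U : Subgroup G // IsOpen (U : Set G) ∧ H ≤ U} := by
    have hex : ∀ β : Ordinal, β < μ →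
        ∃ U : Subgroup G, IsOpen (U : Set G) ∧ U ⊓ T.ser β = T.ser (β + 1) := by
      intro β hβ
      exact AccAux.exists_open_inter_eq (hser_mono (hlt_succ β).le (hsucc_le hβ))
        (T.isClosed' β) (T.isClosed' (β + 1)) (hfin β hβ)
    choose f hf1 hf2 using hex
    have hkey : ∀ (β γ : Ordinal) (hβ : β < μ) (hγ : γ < μ), β < γ → f β hβ ≠ f γ hγ := by
      intro β γ hβ hγ hlt he
      have h1 : T.ser γ ≤ T.ser (β + 1) := by
        apply hser_mono _ (hγ.le)
        rw [Ordinal.add_one_eq_succ]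
        exact Order.succ_le_of_lt hlt
      have h2 : T.ser γ ≤ f γ hγ := by
        rw [← he]
        calc T.ser γ ≤ T.ser (β + 1) := h1
        _ = f β hβ ⊓ T.ser β := (hf2 β hβ).symm
        _ ≤ f β hβ := inf_le_left
      have h3 : f γ hγ ⊓ T.ser γ = T.ser γ := inf_eq_right.mpr h2
      rw [hf2 γ hγ] at h3
      exact (ne_of_lt (T.strictAnti' (hlt_succ γ) (hsucc_le hγ))) h3
    have hHle : ∀ (β : Ordinal) (hβ : β < μ), H ≤ f β hβ := by
      intro β hβ
      have h1 : T.ser μ ≤ T.ser (β + 1) := hser_mono (hsucc_le hβ) le_rfl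
      rw [T.ser_last] at h1
      calc H ≤ T.ser (β + 1) := h1
      _ = f β hβ ⊓ T.ser β := (hf2 β hβ).symm
      _ ≤ f β hβ := inf_le_left
    let F : μ.ToType → {U : Subgroup G // IsOpen (U : Set G) ∧ H ≤ U} := fun i =>
      ⟨f (((Ordinal.ToType.mk (o := μ))).symm i).1 (((Ordinal.ToType.mk (o := μ))).symm i).2,
        hf1 _ _, hHle _ _⟩
    have hFinj : Function.Injective F := by
      intro i j hij
      have hval : f (((Ordinal.ToType.mk (o := μ))).symm i).1 (((Ordinal.ToType.mk (o := μ))).symm i).2 =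
          f (((Ordinal.ToType.mk (o := μ))).symm j).1 (((Ordinal.ToType.mk (o := μ))).symm j).2 :=
        congrArg Subtype.val hij
      have heq : (((Ordinal.ToType.mk (o := μ))).symm i).1 = (((Ordinal.ToType.mk (o := μ))).symm j).1 := by
        rcases lt_trichotomy (((Ordinal.ToType.mk (o := μ))).symm i).1
            (((Ordinal.ToType.mk (o := μ))).symm j).1 with h | h | h
        · exact absurd hval (hkey _ _ _ _ h)
        · exact h
        · exact absurd hval.symm (hkey _ _ _ _ h)
      have : ((Ordinal.ToType.mk (o := μ))).symm i = ((Ordinal.ToType.mk (o := μ))).symm j :=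
        Subtype.ext heq
      exact ((Ordinal.ToType.mk (o := μ))).symm.injective this
    rw [← Cardinal.mk_toType]
    exact Cardinal.mk_le_of_injective hFinj
  -- ## upper bound by transfinite induction
  have hmain : ∀ γ : Ordinal, γ ≤ μ →
      #{U : Subgroup G // IsOpen (U : Set G) ∧ T.ser γ ≤ U} ≤ γ.card ⊔ Cardinal.aleph0 := by
    intro γ
    induction γ using Ordinal.induction with
    | _ γ IH =>
      intro hγμ
      rcases Ordinal.zero_or_succ_or_isSuccLimit γ with h0 | ⟨β, hβ⟩ | hlim
      · subst h0
        have hsub : ∀ p q : {U : Subgroup G // IsOpen (U : Set G) ∧ T.ser 0 ≤ U}, p = q := by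
          intro p q
          apply Subtype.ext
          have hp : p.1 = ⊤ := top_le_iff.mp (le_trans (le_of_eq T.ser_zero.symm) p.2.2)
          have hq : q.1 = ⊤ := top_le_iff.mp (le_trans (le_of_eq T.ser_zero.symm) q.2.2)
          rw [hp, hq]
        haveI : Subsingleton {U : Subgroup G // IsOpen (U : Set G) ∧ T.ser 0 ≤ U} := ⟨hsub⟩
        exact le_trans Cardinal.mk_le_aleph0 le_sup_right
      · -- successor case
        have hβ' : γ = β + 1 := by rw [← hβ, Ordinal.add_one_eq_succ]
        subst hβ'
        have hβμ : β < μ := by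
          have : β + 1 ≤ μ := hγμ
          rw [Ordinal.add_one_eq_succ] at this
          exact Order.succ_le_iff.mp this
        have hstep := AccAux.card_le_step (T.ser β) (T.ser (β + 1))
          (hser_mono (hlt_succ β).le (hsucc_le hβμ)) (T.succ_normal β hβμ)
          (Nat.finite_of_card_ne_zero (hfin β hβμ))
        have hIH := IH β (hlt_succ β) hβμ.le
        calc #{U : Subgroup G // IsOpen (U : Set G) ∧ T.ser (β + 1) ≤ U}
            ≤ #{U : Subgroup G // IsOpen (U : Set G) ∧ T.ser β ≤ U} ⊔ Cardinal.aleph0 := hstep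
        _ ≤ (β.card ⊔ Cardinal.aleph0) ⊔ Cardinal.aleph0 := sup_le_sup_right hIH _
        _ = β.card ⊔ Cardinal.aleph0 := by rw [sup_assoc, sup_idem]
        _ ≤ (β + 1).card ⊔ Cardinal.aleph0 :=
            sup_le_sup_right (Ordinal.card_le_card (hlt_succ β).le) _
      · -- limit case
        have hω : Cardinal.aleph0 ≤ γ.card :=
          Ordinal.aleph0_le_card.mpr (Ordinal.omega0_le_of_isSuccLimit hlim)
        have hser := T.limit_inter γ hγμ hlim
        have hchoice : ∀ U : {U : Subgroup G // IsOpen (U : Set G) ∧ T.ser γ ≤ U},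
            ∃ β : Ordinal, β < γ ∧ T.ser β ≤ U.1 := by
          intro U
          by_contra hcon
          push_neg at hcon
          have hne : ∀ β : Set.Iio γ, ((T.ser β.1 : Set G) ∩ (U.1 : Set G)ᶜ).Nonempty := by
            intro β
            have h1 := hcon β.1 β.2
            rw [SetLike.not_le_iff_exists] at h1
            obtain ⟨x, hx1, hx2⟩ := h1
            exact ⟨x, hx1, hx2⟩
          have hdir : Directed (· ⊇ ·)
              (fun β : Set.Iio γ => (T.ser β.1 : Set G) ∩ (U.1 : Set G)ᶜ) := by
            intro i j
            refine ⟨⟨max i.1 j.1, Set.mem_Iio.mpr (max_lt (Set.mem_Iio.mp i.2) (Set.mem_Iio.mp j.2))⟩, ?_, ?_⟩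
            · exact Set.inter_subset_inter_left _ (SetLike.coe_subset_coe.mpr
                (hser_mono (le_max_left i.1 j.1) ((max_lt (Set.mem_Iio.mp i.2) (Set.mem_Iio.mp j.2)).le.trans hγμ)))
            · exact Set.inter_subset_inter_left _ (SetLike.coe_subset_coe.mpr
                (hser_mono (le_max_right i.1 j.1) ((max_lt (Set.mem_Iio.mp i.2) (Set.mem_Iio.mp j.2)).le.trans hγμ)))
          haveI : Nonempty (Set.Iio γ) := ⟨⟨0, hlim.pos⟩⟩
          have hcl : ∀ β : Set.Iio γ, IsClosed ((T.ser β.1 : Set G) ∩ (U.1 : Set G)ᶜ) :=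
            fun β => (T.isClosed' β.1).inter (isClosed_compl_iff.mpr U.2.1)
          have hcmp : ∀ β : Set.Iio γ, IsCompact ((T.ser β.1 : Set G) ∩ (U.1 : Set G)ᶜ) :=
            fun β => (hcl β).isCompact
          obtain ⟨x, hx⟩ := IsCompact.nonempty_iInter_of_directed_nonempty_isCompact_isClosed
            _ hdir hne hcmp hcl
          rw [Set.mem_iInter] at hx
          have hxser : x ∈ T.ser γ := by
            rw [hser]
            rw [Subgroup.mem_iInf]
            intro β
            rw [Subgroup.mem_iInf]
            intro hβγ
            exact (hx ⟨β, hβγ⟩).1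
          exact (hx ⟨0, hlim.pos⟩).2 (U.2.2 hxser)
        have hbound := AccAux.mk_le_mk_mul_of_fibers
          (f := fun U : {U : Subgroup G // IsOpen (U : Set G) ∧ T.ser γ ≤ U} =>
            (Ordinal.ToType.mk (o := γ)) ⟨(hchoice U).choose, (hchoice U).choose_spec.1⟩)
          (c := γ.card ⊔ Cardinal.aleph0) ?_
        · calc #{U : Subgroup G // IsOpen (U : Set G) ∧ T.ser γ ≤ U}
              ≤ #γ.ToType * (γ.card ⊔ Cardinal.aleph0) := hbound
          _ = γ.card * (γ.card ⊔ Cardinal.aleph0) := by rw [Cardinal.mk_toType]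
          _ ≤ (γ.card ⊔ Cardinal.aleph0) * (γ.card ⊔ Cardinal.aleph0) :=
              mul_le_mul' le_sup_left le_rfl
          _ = γ.card ⊔ Cardinal.aleph0 := Cardinal.mul_eq_self (le_trans hω le_sup_left)
        · intro b
          have hfib : Function.Injective
              (fun p : {U : {U : Subgroup G // IsOpen (U : Set G) ∧ T.ser γ ≤ U} //
                  (Ordinal.ToType.mk (o := γ)) ⟨(hchoice U).choose, (hchoice U).choose_spec.1⟩ = b} =>
                (⟨p.1.1, p.1.2.1, by
                  have h1 : (((Ordinal.ToType.mk (o := γ))).symm b).1 = (hchoice p.1).choose := by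
                    have h2 := congrArg (fun x => (((Ordinal.ToType.mk (o := γ))).symm x).1) p.2
                    simpa using h2.symm
                  rw [h1]
                  exact (hchoice p.1).choose_spec.2⟩ :
                  {U : Subgroup G // IsOpen (U : Set G) ∧
                    T.ser (((Ordinal.ToType.mk (o := γ))).symm b).1 ≤ U})) := by
            intro p q h
            simp only [Subtype.mk.injEq] at h
            apply Subtype.ext
            apply Subtype.ext
            exact h
          calc #{U : {U : Subgroup G // IsOpen (U : Set G) ∧ T.ser γ ≤ U} //
              (Ordinal.ToType.mk (o := γ)) ⟨(hchoice U).choose, (hchoice U).choose_spec.1⟩ = b}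
              ≤ #{U : Subgroup G // IsOpen (U : Set G) ∧
                  T.ser (((Ordinal.ToType.mk (o := γ))).symm b).1 ≤ U} :=
                Cardinal.mk_le_of_injective hfib
          _ ≤ (((Ordinal.ToType.mk (o := γ))).symm b).1.card ⊔ Cardinal.aleph0 :=
                IH _ (((Ordinal.ToType.mk (o := γ))).symm b).2
                  (((((Ordinal.ToType.mk (o := γ))).symm b).2.le).trans hγμ)
          _ ≤ γ.card ⊔ Cardinal.aleph0 :=
                sup_le_sup_right
                  (Ordinal.card_le_card (((Ordinal.ToType.mk (o := γ))).symm b).2.le) _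
  -- ## infinite length
  have hωμ : Cardinal.aleph0 ≤ μ.card := by
    rw [Ordinal.aleph0_le_card]
    by_contra hno
    push_neg at hno
    obtain ⟨n, hn⟩ := Ordinal.lt_omega0.mp hno
    have hkey : ∀ m : ℕ, (m : Ordinal) ≤ μ → (T.ser m).index ≠ 0 := by
      intro m
      induction m with
      | zero =>
        intro _
        have h0 : ((0 : ℕ) : Ordinal) = 0 := by simp
        rw [h0, T.ser_zero, Subgroup.index_top]
        exact one_ne_zero
      | succ k ih =>
        intro hk1
        have hcast : ((k + 1 : ℕ) : Ordinal) = (k : Ordinal) + 1 := by push_cast; rfl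
        have hklt : (k : Ordinal) < μ := by
          apply lt_of_lt_of_le _ hk1
          rw [hcast]
          exact hlt_succ _
        have h2 := Subgroup.relIndex_mul_index
          (hser_mono (hlt_succ (k : Ordinal)).le (hsucc_le hklt))
        rw [hcast]
        intro h0
        rw [h0] at h2
        rcases mul_eq_zero.mp h2 with h | h
        · exact hfin (k : Ordinal) hklt h
        · exact ih hklt.le h
    have hser_eq : T.ser μ = T.ser (n : Ordinal) := congrArg T.ser hn
    have hfinal : (T.ser μ).index ≠ 0 := by rw [hser_eq]; exact hkey n hn.symm.le
    rw [T.ser_last] at hfinal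
    exact hfinal hHinf
  -- ## conclude
  have hupper := hmain μ le_rfl
  rw [T.ser_last] at hupper
  refine le_antisymm hlower ?_
  calc #{U : Subgroup G // IsOpen (U : Set G) ∧ H ≤ U} ≤ μ.card ⊔ Cardinal.aleph0 := hupper
  _ = μ.card := sup_eq_left.mpr hωμ
end

section
/- Every composition series of a profinite group G with infinitely many terms has order type of cardinality w₀(G), the cardinality of the set of open subgroups of G. -/
open scoped Pointwise

set_option linter.unusedSectionVars false

section Aux
variable {G : Type} [Group G] [TopologicalSpace G] [IsTopologicalGroup G]
    [CompactSpace G] [T2Space G] [TotallyDisconnectedSpace G]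

lemma aux_exists_openNormal_disjoint {D : Set G} (hD : IsClosed D) (h1 : (1 : G) ∉ D) :
    ∃ W : Subgroup G, W.Normal ∧ IsOpen (W : Set G) ∧ Disjoint (W : Set G) D := by
  obtain ⟨V, hV, h1V, hVD⟩ := compact_exists_isClopen_in_isOpen hD.isOpen_compl h1
  obtain ⟨H, hH⟩ := IsTopologicalGroup.exist_openNormalSubgroup_sub_clopen_nhds_of_one hV h1V
  exact ⟨H.toSubgroup, H.isNormal', H.isOpen,
    Set.disjoint_left.mpr fun x hx hxD => (hVD (hH hx)) hxD⟩

lemma aux_diff_closed {H K : Subgroup G} (hH : IsClosed (H : Set G))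
    (hK : IsClosed (K : Set G)) (hfin : K.relIndex H ≠ 0) :
    IsClosed ((H : Set G) \ (K : Set G)) := by
  haveI : CompactSpace ↥H := isCompact_iff_compactSpace.mp hH.isCompact
  haveI : (K.subgroupOf H).FiniteIndex := ⟨hfin⟩
  have hKc : IsClosed ((K.subgroupOf H : Subgroup ↥H) : Set ↥H) := by
    have : ((K.subgroupOf H : Subgroup ↥H) : Set ↥H) = Subtype.val ⁻¹' (K : Set G) := by
      ext x; simp [Subgroup.mem_subgroupOf]
    rw [this]
    exact hK.preimage continuous_subtype_val
  have hKo : IsOpen ((K.subgroupOf H : Subgroup ↥H) : Set ↥H) :=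
    Subgroup.isOpen_of_isClosed_of_finiteIndex _ hKc
  have hcomp : IsCompact (((K.subgroupOf H : Subgroup ↥H) : Set ↥H)ᶜ) :=
    (isClosed_compl_iff.mpr hKo).isCompact
  have himg : (Subtype.val '' (((K.subgroupOf H : Subgroup ↥H) : Set ↥H)ᶜ)) =
      (H : Set G) \ (K : Set G) := by
    ext x
    constructor
    · rintro ⟨⟨y, hy⟩, hyc, rfl⟩
      exact ⟨hy, fun hk => hyc (by simpa [Subgroup.mem_subgroupOf] using hk)⟩
    · rintro ⟨hx, hxk⟩
      exact ⟨⟨x, hx⟩, by simpa [Subgroup.mem_subgroupOf] using hxk, rfl⟩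
  rw [← himg]
  exact (hcomp.image continuous_subtype_val).isClosed

end Aux


/-- Every composition series of a profinite group `G` with infinitely
many terms has order type of cardinality `w₀(G)`, the cardinality of the set of open
subgroups of `G`. -/
theorem length_of_composition_series
    {G : Type} [Group G] [TopologicalSpace G] [IsTopologicalGroup G]
    [CompactSpace G] [T2Space G] [TotallyDisconnectedSpace G]
    {μ : Ordinal.{0}} (C : CompSeries G μ ⊤) (hinf : Cardinal.aleph0 ≤ μ.card) :
    μ.card = Cardinal.mk {U : Subgroup G // IsOpen (U : Set G)} := by
  classical
  have hlt1 : ∀ α : Ordinal.{0}, α < α + 1 := fun α => by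
    rw [Ordinal.add_one_eq_succ]; exact Order.lt_succ α
  have hsucc_le : ∀ {α : Ordinal.{0}}, α < μ → α + 1 ≤ μ := fun {α} h => by
    rw [Ordinal.add_one_eq_succ]; exact Order.succ_le_of_lt h
  have hsub : ∀ {α : Ordinal.{0}}, α < μ → C.ser (α + 1) ≤ C.ser α :=
    fun {α} hα => le_of_lt (C.strictAnti' (hlt1 α) (hsucc_le hα))
  have hser_le : ∀ {α β : Ordinal.{0}}, α ≤ β → β ≤ μ → C.ser β ≤ C.ser α := by
    intro α β hab hbμ
    rcases eq_or_lt_of_le hab with rfl | h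
    · exact le_rfl
    · exact (C.strictAnti' h hbμ).le
  have hDclosed : ∀ α : Ordinal.{0}, α < μ →
      IsClosed ((C.ser α : Set G) \ (C.ser (α + 1) : Set G)) := fun α hα =>
    aux_diff_closed (C.isClosed' α) (C.isClosed' (α + 1)) (C.finiteFactor α hα)
  have h1D : ∀ α : Ordinal.{0}, (1 : G) ∉ (C.ser α : Set G) \ (C.ser (α + 1) : Set G) :=
    fun α h => h.2 (one_mem _)
  choose W hWnorm hWopen hWdisj using fun (p : Set.Iio μ) =>
    aux_exists_openNormal_disjoint (hDclosed p p.2) (h1D p)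
  -- U p := W p ⊔ ser (p+1) meets ser p only in ser (p+1)
  have hUcap : ∀ (p : Set.Iio μ) (x : G), x ∈ W p ⊔ C.ser ((p : Ordinal) + 1) →
      x ∈ C.ser (p : Ordinal) → x ∈ C.ser ((p : Ordinal) + 1) := by
    intro p x hxU hxα
    haveI := hWnorm p
    rw [← SetLike.mem_coe, Subgroup.normal_mul] at hxU
    obtain ⟨w, hw, h, hh, rfl⟩ := hxU
    by_contra hxk
    have hwα : w ∈ C.ser (p : Ordinal) := by
      have : (w * h) * h⁻¹ ∈ C.ser (p : Ordinal) := mul_mem hxα (inv_mem (hsub p.2 hh))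
      simpa using this
    have hwk : w ∉ C.ser ((p : Ordinal) + 1) := fun hwk => hxk (mul_mem hwk hh)
    exact Set.disjoint_left.mp (hWdisj p) hw ⟨hwα, hwk⟩
  have hserU : ∀ p : Set.Iio μ, ¬ C.ser (p : Ordinal) ≤ W p ⊔ C.ser ((p : Ordinal) + 1) := by
    intro p hle
    obtain ⟨g, hgα, hgk⟩ := SetLike.exists_of_lt (C.strictAnti' (hlt1 p) (hsucc_le p.2))
    exact hgk (hUcap p g (hle hgα) hgα)
  -- the W's intersect in 1
  have hinterW : ∀ x : G, (∀ p : Set.Iio μ, x ∈ W p) → x = 1 := by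
    intro x hx
    by_contra hx1
    have hne : {β : Ordinal.{0} | β ≤ μ ∧ x ∉ C.ser β}.Nonempty :=
      ⟨μ, le_rfl, by rw [C.ser_last]; simpa [Subgroup.mem_bot] using hx1⟩
    obtain ⟨hβμ, hβx⟩ := csInf_mem hne
    set β₀ := sInf {β : Ordinal.{0} | β ≤ μ ∧ x ∉ C.ser β} with hβ₀
    have hmin : ∀ γ < β₀, x ∈ C.ser γ := by
      intro γ hγ
      by_contra hγx
      exact absurd (csInf_le' (show γ ∈ {β : Ordinal.{0} | β ≤ μ ∧ x ∉ C.ser β} from ⟨le_trans hγ.le hβμ, hγx⟩)) (not_le.mpr hγ)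
    rcases Ordinal.zero_or_succ_or_isSuccLimit β₀ with h0 | ⟨γ, hγ⟩ | hlim
    · exact hβx (by rw [h0, C.ser_zero]; trivial)
    · have hγβ : γ < β₀ := by rw [← hγ]; exact Order.lt_succ γ
      have hγμ : γ < μ := lt_of_lt_of_le hγβ hβμ
      have hxγ : x ∈ C.ser γ := hmin γ hγβ
      have hxk : x ∉ C.ser (γ + 1) := by
        rw [Ordinal.add_one_eq_succ, hγ]; exact hβx
      exact Set.disjoint_left.mp (hWdisj ⟨γ, hγμ⟩) (hx ⟨γ, hγμ⟩) ⟨hxγ, hxk⟩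
    · apply hβx
      rw [C.limit_inter β₀ hβμ hlim]
      simp only [Subgroup.mem_iInf, Set.mem_Iio]
      intro β hβ
      exact hmin β hβ
  -- index type
  set ι := μ.ToType with hι
  let e : Set.Iio μ ≃o ι := Ordinal.ToType.mk (o := μ)
  haveI : Infinite ι := by
    rw [Cardinal.infinite_iff, Cardinal.mk_toType]; exact hinf
  -- lower bound
  have hlower : μ.card ≤ Cardinal.mk {U : Subgroup G // IsOpen (U : Set G)} := by
    have key : ∀ {p q : Set.Iio μ}, (p : Ordinal) < (q : Ordinal) →
        W p ⊔ C.ser ((p : Ordinal) + 1) ≠ W q ⊔ C.ser ((q : Ordinal) + 1) := by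
      intro p q hpq heq
      have h1 : C.ser (q : Ordinal) ≤ W p ⊔ C.ser ((p : Ordinal) + 1) := by
        refine le_trans (hser_le ?_ q.2.le) le_sup_right
        rw [Ordinal.add_one_eq_succ]; exact Order.succ_le_of_lt hpq
      rw [heq] at h1
      exact hserU q h1
    have hf : Function.Injective
        (fun i : ι => (⟨W (e.symm i) ⊔ C.ser ((e.symm i : Ordinal) + 1),
          Subgroup.isOpen_mono le_sup_left (hWopen _)⟩ :
          {U : Subgroup G // IsOpen (U : Set G)})) := by
      intro i j hij
      have hval := congrArg Subtype.val hij
      simp only at hval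
      rcases lt_trichotomy ((e.symm i : Ordinal)) ((e.symm j : Ordinal)) with h | h | h
      · exact absurd hval (key h)
      · have : e.symm i = e.symm j := Subtype.ext h
        exact e.symm.injective this
      · exact absurd hval.symm (key h)
    calc μ.card = Cardinal.mk ι := (Cardinal.mk_toType μ).symm
      _ ≤ _ := Cardinal.mk_le_of_injective hf
  -- upper bound
  have hVopen : ∀ t : Finset ι,
      IsOpen ((⨅ i ∈ t, W (e.symm i) : Subgroup G) : Set G) := by
    intro t
    have hco : ((⨅ i ∈ t, W (e.symm i) : Subgroup G) : Set G)
        = ⋂ i ∈ t, (W (e.symm i) : Set G) := by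
      simp [Subgroup.coe_iInf]
    rw [hco]
    exact t.finite_toSet.isOpen_biInter fun i _ => hWopen _
  have hcover : ∀ U : Subgroup G, IsOpen (U : Set G) →
      ∃ t : Finset ι, (⨅ i ∈ t, W (e.symm i)) ≤ U := by
    intro U hU
    have hs : IsCompact ((U : Set G)ᶜ) := (isClosed_compl_iff.mpr hU).isCompact
    have hZ : ∀ i : ι, IsClosed ((W (e.symm i)) : Set G) :=
      fun i => Subgroup.isClosed_of_isOpen _ (hWopen _)
    have hempty : ((U : Set G)ᶜ) ∩ ⋂ i : ι, (W (e.symm i) : Set G) = ∅ := by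
      ext x
      simp only [Set.mem_inter_iff, Set.mem_compl_iff, Set.mem_iInter,
        Set.mem_empty_iff_false, iff_false, not_and]
      intro hxU hxW
      apply hxU
      have hx1 : x = 1 := by
        apply hinterW
        intro p
        have h := hxW (e p)
        rwa [e.symm_apply_apply] at h
      rw [hx1]; exact one_mem U
    obtain ⟨t, ht⟩ := hs.elim_finite_subfamily_closed _ hZ hempty
    refine ⟨t, fun x hx => ?_⟩
    by_contra hxU
    have hmem : x ∈ ((U : Set G)ᶜ) ∩ ⋂ i ∈ t, (W (e.symm i) : Set G) := by
      refine ⟨hxU, ?_⟩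
      simp only [Set.mem_iInter]
      intro i hi
      have := (Subgroup.mem_iInf.mp hx) i
      exact (Subgroup.mem_iInf.mp this) hi
    rw [ht] at hmem
    exact hmem
  have hfib : ∀ t : Finset ι,
      {U : Subgroup G | IsOpen (U : Set G) ∧ (⨅ i ∈ t, W (e.symm i)) ≤ U}.Finite := by
    intro t
    set V : Subgroup G := ⨅ i ∈ t, W (e.symm i) with hV
    haveI : Finite (G ⧸ V) := Subgroup.quotient_finite_of_isOpen V (hVopen t)
    have key : ∀ U : Subgroup G, V ≤ U →
        ((QuotientGroup.mk : G → G ⧸ V) ⁻¹'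
          ((QuotientGroup.mk : G → G ⧸ V) '' (U : Set G))) = (U : Set G) := by
      intro U hVU
      ext x
      simp only [Set.mem_preimage, Set.mem_image, SetLike.mem_coe]
      constructor
      · rintro ⟨u, hu, huv⟩
        have h1 : u⁻¹ * x ∈ V := QuotientGroup.eq.mp huv
        have : x = u * (u⁻¹ * x) := by group
        rw [this]
        exact mul_mem hu (hVU h1)
      · exact fun hx => ⟨x, hx, rfl⟩
    apply Set.Finite.of_finite_image (f := fun U : Subgroup G =>
      ((QuotientGroup.mk : G → G ⧸ V) '' (U : Set G)))
    · exact Set.toFinite _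
    · intro U₁ h₁ U₂ h₂ himg
      have himg' : (QuotientGroup.mk : G → G ⧸ V) '' (U₁ : Set G)
          = (QuotientGroup.mk : G → G ⧸ V) '' (U₂ : Set G) := himg
      apply SetLike.coe_injective
      rw [← key U₁ h₁.2, himg', key U₂ h₂.2]
  have hupper : Cardinal.mk {U : Subgroup G // IsOpen (U : Set G)} ≤ μ.card := by
    have hsubset : {U : Subgroup G | IsOpen (U : Set G)} ⊆
        ⋃ t : Finset ι,
          {U : Subgroup G | IsOpen (U : Set G) ∧ (⨅ i ∈ t, W (e.symm i)) ≤ U} := by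
      intro U hU
      obtain ⟨t, ht⟩ := hcover U hU
      exact Set.mem_iUnion.mpr ⟨t, hU, ht⟩
    calc Cardinal.mk {U : Subgroup G // IsOpen (U : Set G)}
        ≤ Cardinal.mk (⋃ t : Finset ι,
            {U : Subgroup G | IsOpen (U : Set G) ∧ (⨅ i ∈ t, W (e.symm i)) ≤ U}) :=
          Cardinal.mk_le_mk_of_subset hsubset
      _ ≤ Cardinal.mk (Finset ι) * ⨆ t : Finset ι, Cardinal.mk
            {U : Subgroup G | IsOpen (U : Set G) ∧ (⨅ i ∈ t, W (e.symm i)) ≤ U} :=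
          Cardinal.mk_iUnion_le _
      _ ≤ Cardinal.mk (Finset ι) * Cardinal.aleph0 := by
          refine mul_le_mul_right (ciSup_le' fun t => ?_) _
          exact (Cardinal.lt_aleph0_iff_set_finite.mpr (hfib t)).le
      _ = μ.card * Cardinal.aleph0 := by
          rw [Cardinal.mk_finset_of_infinite, Cardinal.mk_toType]
      _ = μ.card := Cardinal.mul_eq_left hinf hinf Cardinal.aleph0_ne_zero
  exact le_antisymm hlower hupper
end

section
/- Every transfinite radical extension is locally radical: if a separable element x over a field F lies in the top of a transfinite tower of radical extensions (each successor step adjoining an n-th root of an element, and limit steps being unions), then x lies in a finite tower of radical extensions of F. -/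
open IntermediateField Polynomial


/-- A transfinite radical tower over `F` inside its algebraic closure: an ordinal-indexed
chain of intermediate fields starting at `F`, where each successor step adjoins an `n`-th
root of an element of the previous field, and limit steps are unions. -/
def RadicalTower (F : Type*) [Field F] (μ : Ordinal)
    (c : Ordinal → IntermediateField F (AlgebraicClosure F)) : Prop :=
  c 0 = ⊥ ∧
  (∀ α < μ, ∃ (n : ℕ) (x : AlgebraicClosure F), 0 < n ∧ x ^ n ∈ c α ∧
      c (α + 1) = c α ⊔ IntermediateField.adjoin F {x}) ∧
  (∀ α ≤ μ, Order.IsSuccLimit α → c α = ⨆ β ∈ Set.Iio α, c β)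

/-- Transfinite radical extensions are locally radical: if a separable
element `x` over `F` lies in the top of a transfinite radical tower over `F`, then `x`
lies in the top of a finite radical tower over `F`. -/
theorem transfinite_radical_is_locally_radical
    (F : Type*) [Field F] (x : AlgebraicClosure F) (hsep : IsSeparable F x)
    (h : ∃ (μ : Ordinal) (c : Ordinal → IntermediateField F (AlgebraicClosure F)),
        RadicalTower F μ c ∧ x ∈ c μ) :
    ∃ (n : ℕ) (c : ℕ → IntermediateField F (AlgebraicClosure F)),
      c 0 = ⊥ ∧
      (∀ i < n, ∃ (m : ℕ) (y : AlgebraicClosure F), 0 < m ∧ y ^ m ∈ c i ∧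
        c (i + 1) = c i ⊔ IntermediateField.adjoin F {y}) ∧
      x ∈ c n := by
  classical
  obtain ⟨μ, c, ⟨h0, hsucc, hlim⟩, hx⟩ := h
  -- monotonicity of the chain on [0, μ]
  have mono : ∀ γ ≤ μ, ∀ β ≤ γ, c β ≤ c γ := by
    intro γ
    induction γ using Ordinal.induction with
    | _ γ IH =>
      intro hγ β hβ
      rcases eq_or_lt_of_le hβ with rfl | hβ
      · exact le_rfl
      rcases Ordinal.zero_or_succ_or_isSuccLimit γ with rfl | ⟨δ, rfl⟩ | hL
      · exact absurd hβ (not_lt_zero (a := β))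
      · rw [← Ordinal.add_one_eq_succ] at *
        have hδ : δ < δ + 1 := by rw [Ordinal.add_one_eq_succ]; exact Order.lt_succ δ
        have hβδ : β ≤ δ := by
          rw [Ordinal.add_one_eq_succ] at hβ; exact Order.lt_succ_iff.mp hβ
        have h1 : c β ≤ c δ := IH δ hδ (le_trans hδ.le hγ) β hβδ
        obtain ⟨n, y, hn, hyn, heq⟩ := hsucc δ (lt_of_lt_of_le hδ hγ)
        rw [heq]
        exact le_trans h1 le_sup_left
      · rw [hlim γ hγ hL]
        exact le_trans (le_refl (c β)) (le_biSup _ hβ)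
  -- main transfinite induction: any finite subset of `c α` lies in a finite radical tower
  have key : ∀ α ≤ μ, ∀ s : Finset (AlgebraicClosure F),
      (↑s : Set (AlgebraicClosure F)) ⊆ (c α : Set (AlgebraicClosure F)) →
      ∃ (n : ℕ) (d : ℕ → IntermediateField F (AlgebraicClosure F)),
        d 0 = ⊥ ∧
        (∀ i < n, ∃ (m : ℕ) (y : AlgebraicClosure F), 0 < m ∧ y ^ m ∈ d i ∧
          d (i + 1) = d i ⊔ IntermediateField.adjoin F {y}) ∧
        ∀ a ∈ s, a ∈ d n := by
    intro α
    induction α using Ordinal.induction with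
    | _ α IH =>
      intro hα s hs
      rcases Ordinal.zero_or_succ_or_isSuccLimit α with rfl | ⟨δ, rfl⟩ | hL
      · -- base case
        refine ⟨0, fun _ => ⊥, rfl, by omega, fun a ha => ?_⟩
        have := hs ha
        rwa [h0] at this
      · -- successor case
        rw [← Ordinal.add_one_eq_succ] at *
        have hδμ : δ < μ := lt_of_lt_of_le (by rw [Ordinal.add_one_eq_succ]; exact Order.lt_succ δ) hα
        obtain ⟨n, y, hn, hyn, heq⟩ := hsucc δ hδμ
        -- each a ∈ s is a polynomial in y over c δ
        have hint : IsIntegral (c δ) y := by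
          refine ⟨X ^ n - C ⟨y ^ n, hyn⟩, monic_X_pow_sub_C _ hn.ne', ?_⟩
          simp [sub_eq_zero]
        have hmem : ∀ a : s, (a : AlgebraicClosure F) ∈ Algebra.adjoin (c δ) {y} := by
          intro a
          have ha : (a : AlgebraicClosure F) ∈ c (δ + 1) := hs a.2
          rw [heq, ← restrictScalars_adjoin_eq_sup, mem_restrictScalars] at ha
          have h2 : (IntermediateField.adjoin (c δ) {y}).toSubalgebra = Algebra.adjoin (c δ) {y} :=
            adjoin_simple_toSubalgebra_of_isAlgebraic hint.isAlgebraic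
          rw [← h2]
          exact ha
        have hpoly : ∀ a : s, ∃ p : Polynomial (c δ), aeval y p = (a : AlgebraicClosure F) := by
          intro a
          have := hmem a
          rwa [Algebra.adjoin_singleton_eq_range_aeval, AlgHom.mem_range] at this
        choose p hp using hpoly
        -- collect the coefficients and y^n
        set S : Finset (AlgebraicClosure F) :=
          insert (y ^ n) (s.attach.biUnion fun a =>
            (p a).support.image fun i => (((p a).coeff i : c δ) : AlgebraicClosure F)) with hS
        have hSsub : (↑S : Set (AlgebraicClosure F)) ⊆ (c δ : Set (AlgebraicClosure F)) := by
          intro b hb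
          simp only [hS, Finset.coe_insert, Set.mem_insert_iff, Finset.coe_biUnion,
            Set.mem_iUnion, Finset.mem_coe, Finset.mem_image] at hb
          rcases hb with rfl | ⟨a, _, i, _, rfl⟩
          · exact hyn
          · exact ((p a).coeff i).2
        obtain ⟨m, d, hd0, hdstep, hdS⟩ :=
          IH δ (by rw [Ordinal.add_one_eq_succ]; exact Order.lt_succ δ) hδμ.le S hSsub
        -- extend the tower by one radical step adjoining y
        refine ⟨m + 1, fun i => if i ≤ m then d i else d m ⊔ IntermediateField.adjoin F {y},
          by simp [hd0], ?_, ?_⟩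
        · intro i hi
          rcases Nat.lt_or_ge i m with hi' | hi'
          · obtain ⟨m', y', hm', hy', heq'⟩ := hdstep i hi'
            exact ⟨m', y', hm', by simpa only [if_pos hi'.le] using hy', by simp only [if_pos hi'.le, if_pos (show i + 1 ≤ m from hi')]; exact heq'⟩
          · have : i = m := by omega
            subst this
            exact ⟨n, y, hn, by simpa using hdS _ (Finset.mem_insert_self _ _), by simp⟩
        · intro a ha
          simp only [Nat.lt_irrefl, if_neg (by omega : ¬ m + 1 ≤ m)]
          set K := d m ⊔ IntermediateField.adjoin F {y} with hK
          have hyK : y ∈ K := SetLike.le_def.mp le_sup_right (mem_adjoin_simple_self F y)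
          have hcoeff : ∀ i ∈ (p ⟨a, ha⟩).support,
              (((p ⟨a, ha⟩).coeff i : c δ) : AlgebraicClosure F) ∈ K := by
            intro i hi
            refine SetLike.le_def.mp le_sup_left ?_
            apply hdS
            refine Finset.mem_insert_of_mem (Finset.mem_biUnion.mpr ⟨⟨a, ha⟩, Finset.mem_attach _ _, ?_⟩)
            exact Finset.mem_image_of_mem _ hi
          have heval : (aeval y) (p ⟨a, ha⟩) = a := hp ⟨a, ha⟩
          rw [← heval, aeval_def, eval₂_eq_sum, Polynomial.sum]
          exact sum_mem fun i hi => mul_mem (hcoeff i hi) (pow_mem hyK i)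
      · -- limit case
        have hfin : ∀ t : Finset (AlgebraicClosure F),
            (↑t : Set (AlgebraicClosure F)) ⊆ (c α : Set (AlgebraicClosure F)) →
            ∃ β < α, ∀ a ∈ t, a ∈ c β := by
          intro t
          induction t using Finset.induction with
          | empty => exact fun _ => ⟨0, hL.pos, by simp⟩
          | @insert b t hb ih =>
            intro ht
            obtain ⟨β₁, hβ₁, h1⟩ := ih (le_trans (by simp) ht)
            -- b ∈ c α = ⨆ β ∈ Iio α, c β
            have hbα : b ∈ c α := ht (by simp)
            rw [hlim α hα hL, ← iSup_subtype''] at hbα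
            obtain ⟨u, hu⟩ := exists_finset_of_mem_iSup hbα
            have hne : u.sup (fun i => (i : Ordinal)) < α := by
              rcases u.eq_empty_or_nonempty with rfl | hune
              · simpa using hL.pos
              · exact (Finset.sup_lt_iff (by simpa using hL.pos)).mpr fun i _ => i.2
            have hb2 : b ∈ c (u.sup fun i => (i : Ordinal)) := by
              refine (iSup_le fun i => iSup_le fun hi => ?_ : (⨆ i ∈ u, c i) ≤ _) hu
              exact mono _ (le_of_lt (lt_of_lt_of_le hne hα)) _ (Finset.le_sup hi)
            refine ⟨max β₁ (u.sup fun i => (i : Ordinal)), max_lt hβ₁ hne, fun a ha => ?_⟩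
            rcases Finset.mem_insert.mp ha with rfl | ha
            · exact mono _ (le_of_lt (lt_of_lt_of_le (max_lt hβ₁ hne) hα)) _ (le_max_right _ _) hb2
            · exact mono _ (le_of_lt (lt_of_lt_of_le (max_lt hβ₁ hne) hα)) _ (le_max_left _ _) (h1 a ha)
        obtain ⟨β, hβ, hβs⟩ := hfin s hs
        exact IH β hβ (le_of_lt (lt_of_lt_of_le hβ hα)) s (fun a ha => hβs a ha)
  obtain ⟨n, d, hd0, hdstep, hdx⟩ := key μ le_rfl {x} (by simpa using hx)
  exact ⟨n, d, hd0, hdstep, hdx x (Finset.mem_singleton_self x)⟩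
end
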